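/- arXiv:1304.7790 — 8 statements merged into one kernel-verified Lean document; each statement's English description precedes it below -/
import Mathlib

section
/- The number of primitive binary words of length n with an odd number of ones equals the sum over odd divisors d of n of μ(d)·2^{n/d - 1}, where μ is the Möbius function. -/
/-- Number of ones in a binary word of length `n`. -/
def onesCount {n : ℕ} (w : Fin n → Fin 2) : ℕ :=
  (Finset.univ.filter (fun i => w i = 1)).card

/-- A word of length `n` is primitive if it is not a concatenation of `n/d ≥ 2`
copies of a word of some strictly shorter length `d`. -/
def PrimitiveWord {k n : ℕ} (w : Fin n → Fin k) : Prop :=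
  ¬ ∃ d : ℕ, ∃ hd : 0 < d, ∃ hdn : d < n, d ∣ n ∧
      ∀ i : Fin n, w i = w ⟨(i : ℕ) % d, Nat.lt_trans (Nat.mod_lt _ hd) hdn⟩


/-!
A nonempty word `w` of length `n` is, in exactly one way, the `n / p`-fold repetition of a
primitive word `u` of length `p ∣ n`: `p` is the least divisor of `n` that is a period of `w`,
and it divides every other such period because, by the Chinese remainder theorem, the gcd of two
periods dividing `n` is again a period. As `w` has `n / p` times as many ones as `u`, it has odd
weight iff `n / p` and `u` are odd. Sorting the `2 ^ (n - 1)` words of odd weight by their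
primitive root gives `χ * P = W` for Dirichlet convolution, with `χ` the indicator of the odd
numbers, `P n` the number of primitive words of odd weight and `W n = 2 ^ (n - 1)`. Since `χ` is
completely multiplicative, the pointwise product `μχ` satisfies `μχ * χ = (μ * ζ)χ = 1`, hence
`P = μχ * W`.
-/

open Finset

section Periods

variable {α : Type*} {n : ℕ}

def IsPeriod (w : Fin n → α) (d : ℕ) : Prop :=
  ∀ i j : Fin n, (i : ℕ) ≡ j [MOD d] → w i = w j

theorem isPeriod_iff_eq_mod {w : Fin n → α} {d : ℕ} :
    IsPeriod w d ↔ ∀ i : Fin n, w i = w ⟨i % d, (Nat.mod_le _ _).trans_lt i.isLt⟩ := by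
  refine ⟨fun h i => h _ _ (Nat.mod_modEq _ _).symm, fun h i j hij => ?_⟩
  rw [h i, h j]
  exact congrArg w (Fin.ext hij)

theorem isPeriod_self (w : Fin n → α) : IsPeriod w n :=
  fun i j hij => congrArg w (Fin.ext (hij.eq_of_lt_of_lt i.isLt j.isLt))

theorem IsPeriod.gcd {w : Fin n → α} {p q : ℕ} (hp : IsPeriod w p) (hq : IsPeriod w q)
    (hpn : p ∣ n) (hqn : q ∣ n) : IsPeriod w (p.gcd q) := by
  intro i j hij
  have hn : n ≠ 0 := i.pos.ne'
  let k := Nat.chineseRemainder' hij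
  have hk : (k : ℕ) < n :=
    (Nat.chineseRemainder'_lt_lcm hij (ne_zero_of_dvd_ne_zero hn hpn)
      (ne_zero_of_dvd_ne_zero hn hqn)).trans_le (Nat.le_of_dvd i.pos (Nat.lcm_dvd hpn hqn))
  calc w i = w ⟨k, hk⟩ := hp _ _ k.2.1.symm
    _ = w j := hq _ _ k.2.2

theorem isPeriod_of_isPeriod_take {w : Fin n → α} {p q : ℕ} (hp0 : 0 < p) (hpn : p ≤ n)
    (hp : IsPeriod w p) (hqp : q ∣ p) (hq : IsPeriod (Fin.take p hpn w) q) : IsPeriod w q := by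
  intro i j hij
  rw [isPeriod_iff_eq_mod.mp hp i, isPeriod_iff_eq_mod.mp hp j]
  exact hq ⟨i % p, Nat.mod_lt _ hp0⟩ ⟨j % p, Nat.mod_lt _ hp0⟩
    (((Nat.mod_modEq _ _).of_dvd hqp).trans (hij.trans ((Nat.mod_modEq _ _).of_dvd hqp).symm))

theorem IsPeriod.take {w : Fin n → α} {d p : ℕ} (hpn : p ≤ n) (h : IsPeriod w d) :
    IsPeriod (Fin.take p hpn w) d :=
  fun _ _ hij => h _ _ hij

def periodicExtension {p : ℕ} (u : Fin p → α) (hp : 0 < p) : Fin n → α :=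
  fun i => u ⟨i % p, Nat.mod_lt _ hp⟩

theorem isPeriod_periodicExtension {p : ℕ} (u : Fin p → α) (hp : 0 < p) :
    IsPeriod (periodicExtension u hp : Fin n → α) p :=
  fun _ _ hij => congrArg u (Fin.ext hij)

theorem take_periodicExtension {p : ℕ} (u : Fin p → α) (hp : 0 < p) (hpn : p ≤ n) :
    Fin.take p hpn (periodicExtension u hp : Fin n → α) = u :=
  funext fun j => congrArg u (Fin.ext (Nat.mod_eq_of_lt j.isLt))

theorem periodicExtension_take {w : Fin n → α} {p : ℕ} (hp : 0 < p) (hpn : p ≤ n)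
    (h : IsPeriod w p) : periodicExtension (Fin.take p hpn w) hp = w :=
  funext fun i => (isPeriod_iff_eq_mod.mp h i).symm

noncomputable def minPeriod (w : Fin n → α) : ℕ :=
  sInf {d | 0 < d ∧ d ∣ n ∧ IsPeriod w d}

theorem minPeriod_spec (hn : 0 < n) (w : Fin n → α) :
    0 < minPeriod w ∧ minPeriod w ∣ n ∧ IsPeriod w (minPeriod w) :=
  Nat.sInf_mem (s := {d | 0 < d ∧ d ∣ n ∧ IsPeriod w d}) ⟨n, hn, dvd_rfl, isPeriod_self w⟩

theorem minPeriod_le {w : Fin n → α} {d : ℕ} (hd : 0 < d) (hdn : d ∣ n) (h : IsPeriod w d) :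
    minPeriod w ≤ d :=
  Nat.sInf_le (show d ∈ {d | 0 < d ∧ d ∣ n ∧ IsPeriod w d} from ⟨hd, hdn, h⟩)

theorem minPeriod_dvd (hn : 0 < n) {w : Fin n → α} {d : ℕ} (hdn : d ∣ n) (h : IsPeriod w d) :
    minPeriod w ∣ d := by
  obtain ⟨hm, hmn, hmw⟩ := minPeriod_spec hn w
  have hgcd : minPeriod w ≤ (minPeriod w).gcd d :=
    minPeriod_le (Nat.gcd_pos_of_pos_left _ hm) ((Nat.gcd_dvd_left _ _).trans hmn)
      (hmw.gcd h hmn hdn)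
  rw [← Nat.gcd_eq_left_iff_dvd]
  exact le_antisymm (Nat.le_of_dvd hm (Nat.gcd_dvd_left _ _)) hgcd

theorem card_filter_periodicExtension {p : ℕ} (u : Fin p → α) (hp : 0 < p)
    (hpn : p ∣ n) (P : α → Prop) [DecidablePred P] :
    #{i : Fin n | P (periodicExtension u hp i)} = n / p * #{j | P (u j)} := by
  let e : Fin n ≃ Fin (n / p) × Fin p :=
    (finCongr (Nat.div_mul_cancel hpn).symm).trans finProdFinEquiv.symm
  calc #{i : Fin n | P (periodicExtension u hp i)}
      = #{x : Fin (n / p) × Fin p | P (u x.2)} := by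
        refine card_equiv e fun i => ?_
        simp only [mem_filter, mem_univ, true_and]
        rfl
    _ = n / p * #{j | P (u j)} := by
        rw [← univ_product_univ, filter_product_right (fun j => P (u j)), card_product, card_univ,
          Fintype.card_fin]

end Periods

section Primitive

variable {k n : ℕ}

theorem primitiveWord_iff_minPeriod_eq (hn : 0 < n) (w : Fin n → Fin k) :
    PrimitiveWord w ↔ minPeriod w = n := by
  obtain ⟨hm, hmn, hmw⟩ := minPeriod_spec hn w
  constructor
  · intro hw
    refine (Nat.le_of_dvd hn hmn).eq_of_not_lt fun hlt => hw ?_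
    exact ⟨minPeriod w, hm, hlt, hmn, isPeriod_iff_eq_mod.mp hmw⟩
  · rintro heq ⟨d, hd, hdn, hdvd, hw⟩
    have := minPeriod_le hd hdvd (isPeriod_iff_eq_mod.mpr hw)
    omega

theorem primitiveWord_take_minPeriod (hn : 0 < n) {w : Fin n → Fin k} {p : ℕ}
    (hp : minPeriod w = p) (hpn : p ≤ n) : PrimitiveWord (Fin.take p hpn w) := by
  subst hp
  obtain ⟨hp0, hpdvd, hpw⟩ := minPeriod_spec hn w
  rw [primitiveWord_iff_minPeriod_eq hp0]
  obtain ⟨hq0, hqp, hqw⟩ := minPeriod_spec hp0 (Fin.take _ hpn w)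
  have hq : IsPeriod w (minPeriod (Fin.take _ hpn w)) :=
    isPeriod_of_isPeriod_take hp0 hpn hpw hqp hqw
  exact le_antisymm (Nat.le_of_dvd hp0 hqp) (minPeriod_le hq0 (hqp.trans hpdvd) hq)

theorem minPeriod_periodicExtension (hn : 0 < n) {p : ℕ} {u : Fin p → Fin k} (hp : 0 < p)
    (hpn : p ∣ n) (hu : PrimitiveWord u) :
    minPeriod (periodicExtension u hp : Fin n → Fin k) = p := by
  set w : Fin n → Fin k := periodicExtension u hp
  obtain ⟨hq0, -, hqw⟩ := minPeriod_spec hn w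
  have hqp : minPeriod w ∣ p := minPeriod_dvd hn hpn (isPeriod_periodicExtension u hp)
  have hqu : IsPeriod u (minPeriod w) :=
    take_periodicExtension u hp (Nat.le_of_dvd hn hpn) ▸ hqw.take (Nat.le_of_dvd hn hpn)
  rw [primitiveWord_iff_minPeriod_eq hp] at hu
  exact le_antisymm (Nat.le_of_dvd hp hqp) (hu ▸ minPeriod_le hq0 hqp hqu)

end Primitive

theorem onesCount_periodicExtension {n p : ℕ} (u : Fin p → Fin 2) (hp : 0 < p) (hpn : p ∣ n) :
    onesCount (periodicExtension u hp : Fin n → Fin 2) = n / p * onesCount u :=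
  card_filter_periodicExtension u hp hpn (· = 1)

theorem onesCount_eq_mul_onesCount_take {n p : ℕ} {w : Fin n → Fin 2} (hp : 0 < p)
    (hpn : p ∣ n) (hple : p ≤ n) (h : IsPeriod w p) :
    onesCount w = n / p * onesCount (Fin.take p hple w) := by
  conv_lhs => rw [← periodicExtension_take hp hple h]
  exact onesCount_periodicExtension _ hp hpn

theorem card_oddWords_eq_sum_card_oddPrimitiveWords {n : ℕ} (hn : 0 < n) :
    Nat.card {w : Fin n → Fin 2 // Odd (onesCount w)} =
      ∑ p ∈ n.divisors with Odd (n / p),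
        Nat.card {u : Fin p → Fin 2 // PrimitiveWord u ∧ Odd (onesCount u)} := by
  classical
  simp only [Nat.card_eq_fintype_card, Fintype.card_subtype]
  rw [card_eq_sum_card_fiberwise (f := minPeriod) (t := n.divisors.filter (Odd <| n / ·))]
  · refine sum_congr rfl fun p hp => ?_
    obtain ⟨⟨hpn, -⟩, hnp⟩ := by simpa only [mem_filter, Nat.mem_divisors] using hp
    have hp0 : 0 < p := Nat.pos_of_dvd_of_pos hpn hn
    have hple : p ≤ n := Nat.le_of_dvd hn hpn
    refine card_nbij' (Fin.take p hple) (periodicExtension · hp0) ?_ ?_ ?_ ?_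
    · intro w hw
      simp only [coe_filter, mem_filter, mem_univ, true_and, Set.mem_ofPred_eq] at hw ⊢
      obtain ⟨hw, rfl⟩ := hw
      rw [onesCount_eq_mul_onesCount_take hp0 hpn hple (minPeriod_spec hn w).2.2,
        Nat.odd_mul] at hw
      exact ⟨primitiveWord_take_minPeriod hn rfl hple, hw.2⟩
    · intro u hu
      simp only [coe_filter, mem_filter, mem_univ, true_and, Set.mem_ofPred_eq] at hu ⊢
      refine ⟨?_, minPeriod_periodicExtension hn hp0 hpn hu.1⟩
      rw [onesCount_periodicExtension u hp0 hpn, Nat.odd_mul]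
      exact ⟨hnp, hu.2⟩
    · intro w hw
      simp only [coe_filter, mem_filter, mem_univ, true_and, Set.mem_ofPred_eq] at hw
      exact periodicExtension_take hp0 hple (hw.2 ▸ (minPeriod_spec hn w).2.2)
    · intro u _
      exact take_periodicExtension u hp0 hple
  · intro w hw
    obtain ⟨hp, hpn, hpw⟩ := minPeriod_spec hn w
    simp only [coe_filter, mem_univ, true_and, Set.mem_ofPred_eq, Nat.mem_divisors] at hw ⊢
    rw [onesCount_eq_mul_onesCount_take hp hpn (Nat.le_of_dvd hn hpn) hpw, Nat.odd_mul] at hw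
    exact ⟨⟨hpn, hn.ne'⟩, hw.1⟩

theorem onesCount_cons {n : ℕ} (a : Fin 2) (v : Fin n → Fin 2) :
    onesCount (Fin.cons a v : Fin (n + 1) → Fin 2) = a + onesCount v := by
  simp only [onesCount, card_filter, Fin.sum_univ_succ, Fin.cons_zero, Fin.cons_succ]
  congr 1
  fin_cases a <;> rfl

theorem odd_val_add_iff {m : ℕ} {a : Fin 2} : Odd (a + m) ↔ a = if Odd m then 0 else 1 := by
  fin_cases a <;> by_cases h : Odd m <;> simp [h, add_comm 1, Nat.odd_add_one]

def oddWordsEquiv (n : ℕ) :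
    {w : Fin (n + 1) → Fin 2 // Odd (onesCount w)} ≃ (Fin n → Fin 2) where
  toFun w := Fin.tail w.1
  invFun v := ⟨Fin.cons (if Odd (onesCount v) then 0 else 1) v, by
    rw [onesCount_cons, odd_val_add_iff]⟩
  left_inv w := by
    obtain ⟨w, hw⟩ := w
    have h0 : w 0 = if Odd (onesCount (Fin.tail w)) then 0 else 1 := by
      rwa [← Fin.cons_self_tail w, onesCount_cons, odd_val_add_iff] at hw
    ext1
    change Fin.cons _ (Fin.tail w) = w
    rw [← h0, Fin.cons_self_tail]
  right_inv v := Fin.tail_cons _ _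

theorem card_oddWords (n : ℕ) :
    Nat.card {w : Fin (n + 1) → Fin 2 // Odd (onesCount w)} = 2 ^ n := by
  rw [Nat.card_congr (oddWordsEquiv n)]
  simp

namespace ArithmeticFunction

theorem pmul_mul_pmul_of_map_mul {R : Type*} [CommSemiring R] {χ : ArithmeticFunction R}
    (hχ : ∀ a b, χ (a * b) = χ a * χ b) (f g : ArithmeticFunction R) :
    (f * g).pmul χ = f.pmul χ * g.pmul χ := by
  ext n
  simp only [pmul_apply, mul_apply, sum_mul]
  refine sum_congr rfl fun x hx => ?_
  rw [← (Nat.mem_divisorsAntidiagonal.mp hx).1, hχ]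
  ring

theorem one_pmul_of_map_one {R : Type*} [Semiring R] {χ : ArithmeticFunction R} (hχ : χ 1 = 1) :
    (1 : ArithmeticFunction R).pmul χ = 1 := by
  ext n
  rw [pmul_apply, one_apply]
  split_ifs with h
  · rw [h, hχ, one_mul]
  · rw [zero_mul]

end ArithmeticFunction

open ArithmeticFunction
open scoped ArithmeticFunction.zeta ArithmeticFunction.Moebius

def oddIndicator : ArithmeticFunction ℤ :=
  ⟨fun n => if Odd n then 1 else 0, by simp⟩

theorem oddIndicator_apply (n : ℕ) : oddIndicator n = if Odd n then 1 else 0 := rfl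

theorem oddIndicator_map_mul (a b : ℕ) :
    oddIndicator (a * b) = oddIndicator a * oddIndicator b := by
  simp only [oddIndicator_apply, Nat.odd_mul]
  split_ifs <;> simp_all

theorem moebius_pmul_oddIndicator_mul_oddIndicator :
    (μ : ArithmeticFunction ℤ).pmul oddIndicator * oddIndicator = 1 := by
  nth_rw 2 [← zeta_pmul oddIndicator]
  rw [← pmul_mul_pmul_of_map_mul oddIndicator_map_mul, moebius_mul_coe_zeta,
    one_pmul_of_map_one rfl]

noncomputable def oddWordCount : ArithmeticFunction ℤ :=
  ⟨fun n => Nat.card {w : Fin n → Fin 2 // Odd (onesCount w)}, by simp [onesCount]⟩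

noncomputable def oddPrimitiveWordCount : ArithmeticFunction ℤ :=
  ⟨fun n => Nat.card {w : Fin n → Fin 2 // PrimitiveWord w ∧ Odd (onesCount w)},
    by simp [onesCount]⟩

theorem oddWordCount_apply {n : ℕ} (hn : 0 < n) : oddWordCount n = 2 ^ (n - 1) := by
  obtain ⟨m, rfl⟩ := Nat.exists_eq_add_one_of_ne_zero hn.ne'
  change (Nat.card _ : ℤ) = _
  rw [card_oddWords]
  simp

theorem oddIndicator_mul_oddPrimitiveWordCount :
    oddIndicator * oddPrimitiveWordCount = oddWordCount := by
  ext n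
  rcases n.eq_zero_or_pos with rfl | hn
  · simp
  rw [mul_apply,
    Nat.sum_divisorsAntidiagonal' (f := fun a b => oddIndicator a * oddPrimitiveWordCount b)]
  simp only [oddIndicator_apply, ite_mul, one_mul, zero_mul]
  rw [← sum_filter]
  change _ = (Nat.card _ : ℤ)
  rw [card_oddWords_eq_sum_card_oddPrimitiveWords hn, Nat.cast_sum]
  rfl

theorem stmt0 (n : ℕ) :
    (Nat.card {w : Fin n → Fin 2 // PrimitiveWord w ∧ Odd (onesCount w)} : ℤ) =
      ∑ d ∈ n.divisors.filter (fun d => Odd d),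
        (ArithmeticFunction.moebius d) * 2 ^ (n / d - 1) := by
  set μχ : ArithmeticFunction ℤ := (μ : ArithmeticFunction ℤ).pmul oddIndicator
  have h : oddPrimitiveWordCount = μχ * oddWordCount := by
    rw [← oddIndicator_mul_oddPrimitiveWordCount, ← mul_assoc,
      moebius_pmul_oddIndicator_mul_oddIndicator, one_mul]
  change oddPrimitiveWordCount n = _
  rw [h, mul_apply, Nat.sum_divisorsAntidiagonal (f := fun a b => μχ a * oddWordCount b),
    sum_filter]
  refine sum_congr rfl fun d hd => ?_
  rw [pmul_apply, oddIndicator_apply,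
    oddWordCount_apply (Nat.div_pos (Nat.divisor_le hd) (Nat.pos_of_mem_divisors hd))]
  split_ifs <;> simp
end

section
/- Every binary word of length n with an odd number of ones can be written uniquely as q^d where q is a primitive binary word with an odd number of ones and d is an odd divisor of n. -/
/-- `w` is the concatenation of `d` copies of `q` (so `n = d * r`). -/
def IsPowerOf {n r : ℕ} (w : Fin n → Fin 2) (q : Fin r → Fin 2) (d : ℕ) : Prop :=
  n = d * r ∧ ∀ (i : Fin n) (j : Fin r), (i : ℕ) % r = (j : ℕ) → w i = q j

/-- `d` is a period of `w` that divides `n`. -/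
def Per {n : ℕ} (w : Fin n → Fin 2) (d : ℕ) : Prop :=
  0 < d ∧ d ∣ n ∧ ∀ i j : Fin n, (i : ℕ) % d = (j : ℕ) % d → w i = w j

lemma per_self {n : ℕ} (hn : 0 < n) (w : Fin n → Fin 2) : Per w n := by
  refine ⟨hn, dvd_rfl, fun i j h => ?_⟩
  rw [Nat.mod_eq_of_lt i.2, Nat.mod_eq_of_lt j.2] at h
  exact congrArg w (Fin.ext h)

/-- The word as a function on `ZMod n`. -/
noncomputable def Wz {n : ℕ} [NeZero n] (w : Fin n → Fin 2) : ZMod n → Fin 2 :=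
  fun z => w ⟨z.val, ZMod.val_lt z⟩

/-- The subgroup of shifts leaving `w` invariant. -/
noncomputable def Hsub {n : ℕ} [NeZero n] (w : Fin n → Fin 2) : AddSubgroup (ZMod n) where
  carrier := {z | ∀ x, Wz w (x + z) = Wz w x}
  zero_mem' := by intro x; simp
  add_mem' := by
    intro a b ha hb x
    rw [← add_assoc, hb, ha]
  neg_mem' := by
    intro a ha x
    have := ha (x + -a)
    rw [neg_add_cancel_right] at this
    exact this.symm

lemma per_mem {n : ℕ} [NeZero n] (w : Fin n → Fin 2) {d : ℕ} (h : Per w d) :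
    ((d : ℕ) : ZMod n) ∈ Hsub w := by
  obtain ⟨hd, hdn, hper⟩ := h
  intro x
  apply hper
  show (x + (d : ZMod n)).val % d = x.val % d
  rw [ZMod.val_add, ZMod.val_natCast, Nat.mod_mod_of_dvd _ hdn, Nat.add_mod,
    Nat.mod_mod_of_dvd d hdn, Nat.mod_self, Nat.add_zero, Nat.mod_mod]

lemma mem_per {n : ℕ} [NeZero n] (w : Fin n → Fin 2) {g : ℕ} (hg : 0 < g) (hgn : g ∣ n)
    (h : ((g : ℕ) : ZMod n) ∈ Hsub w) : Per w g := by
  refine ⟨hg, hgn, fun i j hij => ?_⟩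
  have hle : (i : ℕ) ≤ (j : ℕ) + n := le_trans (le_of_lt i.2) (Nat.le_add_left _ _)
  have hn0 : n % g = 0 := Nat.mod_eq_zero_of_dvd hgn
  have hmod : (i : ℕ) ≡ (j : ℕ) + n [MOD g] := by
    unfold Nat.ModEq
    rw [Nat.add_mod, hn0, Nat.add_zero, Nat.mod_mod, hij]
  have hdvd : g ∣ (j : ℕ) + n - i := (Nat.modEq_iff_dvd' hle).mp hmod
  set k := (j : ℕ) + n - (i : ℕ) with hk
  have hkg : k / g * g = k := Nat.div_mul_cancel hdvd
  have hmem : ((k / g) • ((g : ℕ) : ZMod n)) ∈ Hsub w := (Hsub w).nsmul_mem h _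
  have := hmem (((i : ℕ) : ZMod n))
  have hnat : (i : ℕ) + k = (j : ℕ) + n := by have := i.2; omega
  have hcast : ((i : ℕ) : ZMod n) + (k / g) • ((g : ℕ) : ZMod n) = ((j : ℕ) : ZMod n) := by
    calc ((i : ℕ) : ZMod n) + (k / g) • ((g : ℕ) : ZMod n)
        = (((i : ℕ) + k / g * g : ℕ) : ZMod n) := by push_cast [nsmul_eq_mul]; ring
      _ = (((j : ℕ) + n : ℕ) : ZMod n) := by rw [hkg, hnat]
      _ = ((j : ℕ) : ZMod n) := by push_cast; simp
  rw [hcast] at this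
  have hi : Wz w (((i : ℕ) : ZMod n)) = w i := by
    show w _ = w i
    congr 1
    exact Fin.ext (by simp [ZMod.val_natCast, Nat.mod_eq_of_lt i.2])
  have hj : Wz w (((j : ℕ) : ZMod n)) = w j := by
    show w _ = w j
    congr 1
    exact Fin.ext (by simp [ZMod.val_natCast, Nat.mod_eq_of_lt j.2])
  rw [hi, hj] at this
  exact this.symm

lemma per_gcd {n : ℕ} (hn : 0 < n) (w : Fin n → Fin 2) {a b : ℕ}
    (ha : Per w a) (hb : Per w b) : Per w (Nat.gcd a b) := by
  haveI : NeZero n := ⟨hn.ne'⟩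
  have hg : 0 < Nat.gcd a b := Nat.gcd_pos_of_pos_left _ ha.1
  have hgn : Nat.gcd a b ∣ n := dvd_trans (Nat.gcd_dvd_left a b) ha.2.1
  apply mem_per w hg hgn
  have hbez : ((Nat.gcd a b : ℕ) : ZMod n) =
      (Nat.gcdA a b) • ((a : ℕ) : ZMod n) + (Nat.gcdB a b) • ((b : ℕ) : ZMod n) := by
    have := Nat.gcd_eq_gcd_ab a b
    calc ((Nat.gcd a b : ℕ) : ZMod n) = (((Nat.gcd a b : ℤ)) : ZMod n) := by push_cast; ring
      _ = (((a : ℤ) * Nat.gcdA a b + (b : ℤ) * Nat.gcdB a b : ℤ) : ZMod n) := by rw [this]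
      _ = _ := by push_cast [zsmul_eq_mul]; ring
  rw [hbez]
  exact (Hsub w).add_mem ((Hsub w).zsmul_mem (per_mem w ha) _)
    ((Hsub w).zsmul_mem (per_mem w hb) _)

lemma onesCount_pow {n d r : ℕ} (w : Fin n → Fin 2) (q : Fin r → Fin 2)
    (hn : n = d * r)
    (h : ∀ (i : Fin n) (j : Fin r), (i : ℕ) % r = (j : ℕ) → w i = q j) :
    onesCount w = d * onesCount q := by
  subst hn
  classical
  unfold onesCount
  rw [Finset.card_filter, Finset.card_filter]
  rw [← Fintype.sum_equiv (finProdFinEquiv : Fin d × Fin r ≃ Fin (d * r))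
    (fun p => if w (finProdFinEquiv p) = 1 then 1 else 0)
    (fun i => if w i = 1 then 1 else 0) (fun p => rfl)]
  have key : ∀ p : Fin d × Fin r, w (finProdFinEquiv p) = q p.2 := by
    rintro ⟨a, b⟩
    apply h
    show ((b : ℕ) + r * a) % r = (b : ℕ)
    rw [Nat.add_mul_mod_self_left, Nat.mod_eq_of_lt b.2]
  simp only [key]
  rw [Fintype.sum_prod_type]
  simp [Finset.sum_const]

theorem stmt2 (n : ℕ) (w : Fin n → Fin 2) (hw : Odd (onesCount w)) :
    ∃ (d r : ℕ) (q : Fin r → Fin 2), Odd d ∧ d ∣ n ∧ PrimitiveWord q ∧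
      Odd (onesCount q) ∧ IsPowerOf w q d ∧
      ∀ (d' r' : ℕ) (q' : Fin r' → Fin 2), Odd d' → PrimitiveWord q' →
        Odd (onesCount q') → IsPowerOf w q' d' → d' = d ∧ r' = r ∧ HEq q' q := by
  classical
  have hn : 0 < n := by
    rcases Nat.eq_zero_or_pos n with h0 | h
    · exfalso
      subst h0
      have h0 : onesCount w = 0 := by unfold onesCount; simp
      rw [h0] at hw
      exact (Nat.not_odd_iff_even.mpr Even.zero) hw
    · exact h
  have hex : ∃ m, Per w m := ⟨n, per_self hn w⟩
  set r := Nat.find hex with hr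
  have hper : Per w r := Nat.find_spec hex
  obtain ⟨hrpos, hrn, hrp⟩ := hper
  have hrlen : r ≤ n := Nat.le_of_dvd hn hrn
  set d := n / r with hd
  have hdr : n = d * r := (Nat.div_mul_cancel hrn).symm
  set q : Fin r → Fin 2 := fun j => w ⟨j, lt_of_lt_of_le j.2 hrlen⟩ with hq
  have hpow : IsPowerOf w q d := by
    refine ⟨hdr, fun i j hij => ?_⟩
    apply hrp
    show (i : ℕ) % r = ((⟨(j : ℕ), lt_of_lt_of_le j.2 hrlen⟩ : Fin n) : ℕ) % r
    show (i : ℕ) % r = (j : ℕ) % r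
    rw [hij, Nat.mod_eq_of_lt j.2]
  have hmin : ∀ m, Per w m → r ∣ m := by
    intro m hm
    have hgcd := per_gcd hn w ⟨hrpos, hrn, hrp⟩ hm
    have h1 : r ≤ Nat.gcd r m := Nat.find_min' hex hgcd
    have h2 : Nat.gcd r m ≤ r := Nat.le_of_dvd hrpos (Nat.gcd_dvd_left r m)
    have h3 : Nat.gcd r m = r := le_antisymm h2 h1
    exact h3 ▸ Nat.gcd_dvd_right r m
  have hprim : PrimitiveWord q := by
    rintro ⟨e, he, her, hedvd, hqe⟩
    have hpere : Per w e := by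
      refine ⟨he, dvd_trans hedvd hrn, fun i j hij => ?_⟩
      have wi : ∀ i : Fin n, w i = q ⟨(i : ℕ) % r, Nat.mod_lt _ hrpos⟩ := fun i =>
        hpow.2 i _ rfl
      rw [wi i, wi j]
      rw [hqe ⟨(i : ℕ) % r, Nat.mod_lt _ hrpos⟩, hqe ⟨(j : ℕ) % r, Nat.mod_lt _ hrpos⟩]
      congr 1
      apply Fin.ext
      show ((i : ℕ) % r) % e = ((j : ℕ) % r) % e
      rw [Nat.mod_mod_of_dvd _ hedvd, Nat.mod_mod_of_dvd _ hedvd, hij]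
    have := Nat.le_of_dvd he (hmin e hpere)
    omega
  have hcount : onesCount w = d * onesCount q := onesCount_pow w q hdr hpow.2
  rw [hcount] at hw
  obtain ⟨hdodd, hqodd⟩ := Nat.odd_mul.mp hw
  refine ⟨d, r, q, hdodd, ⟨r, hdr⟩, hprim, hqodd, hpow, ?_⟩
  intro d' r' q' hd'odd hq'prim hq'odd hpow'
  obtain ⟨hn', hW⟩ := hpow'
  have hr'pos : 0 < r' := by
    rcases Nat.eq_zero_or_pos r' with h0 | h
    · subst h0; simp at hn'; omega
    · exact h
  have hr'n : r' ∣ n := ⟨d', by rw [hn']; ring⟩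
  have hr'len : r' ≤ n := Nat.le_of_dvd hn hr'n
  have hperr' : Per w r' := by
    refine ⟨hr'pos, hr'n, fun i j hij => ?_⟩
    have h1 := hW i ⟨(i : ℕ) % r', Nat.mod_lt _ hr'pos⟩ rfl
    have h2 := hW j ⟨(j : ℕ) % r', Nat.mod_lt _ hr'pos⟩ rfl
    rw [h1, h2]
    exact congrArg q' (Fin.ext hij)
  have hrr' : r ∣ r' := hmin r' hperr'
  have hr'r : r' = r := by
    by_contra hne
    have hlt : r < r' := lt_of_le_of_ne (Nat.le_of_dvd hr'pos hrr') (fun h => hne h.symm)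
    apply hq'prim
    refine ⟨r, hrpos, hlt, hrr', fun i => ?_⟩
    have e1 : w ⟨(i : ℕ), lt_of_lt_of_le i.2 hr'len⟩ = q' i := by
      apply hW
      show (i : ℕ) % r' = (i : ℕ)
      exact Nat.mod_eq_of_lt i.2
    have hmlt : (i : ℕ) % r < r' := lt_trans (Nat.mod_lt _ hrpos) hlt
    have e2 : w ⟨(i : ℕ) % r, lt_of_lt_of_le hmlt hr'len⟩
        = q' ⟨(i : ℕ) % r, Nat.lt_trans (Nat.mod_lt _ hrpos) hlt⟩ := by
      apply hW
      show ((i : ℕ) % r) % r' = (i : ℕ) % r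
      exact Nat.mod_eq_of_lt hmlt
    have e3 : w ⟨(i : ℕ), lt_of_lt_of_le i.2 hr'len⟩
        = w ⟨(i : ℕ) % r, lt_of_lt_of_le hmlt hr'len⟩ := by
      apply hrp
      show (i : ℕ) % r = ((i : ℕ) % r) % r
      rw [Nat.mod_mod]
    rw [← e1, e3, e2]
  subst hr'r
  have hdd : d' = d := Nat.eq_of_mul_eq_mul_right hrpos (hn'.symm.trans hdr)
  refine ⟨hdd, rfl, heq_of_eq ?_⟩
  funext j
  have := hW ⟨(j : ℕ), lt_of_lt_of_le j.2 hrlen⟩ j (Nat.mod_eq_of_lt j.2)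
  rw [← this]
end

section
/- A permutation τ ∈ Sₙ has at most one descent if and only if τ avoids the patterns 321, 2143, and 3142. -/
/-- `τ` contains the pattern `ρ`: some subsequence of the one-line notation of
`τ` is in the same relative order as `ρ`. -/
def ContainsPat {n m : ℕ} (τ : Fin n → Fin n) (ρ : Fin m → Fin m) : Prop :=
  ∃ f : Fin m ↪o Fin n, ∀ j l : Fin m, ρ j < ρ l ↔ τ (f j) < τ (f l)

def AvoidsPat {n m : ℕ} (τ : Fin n → Fin n) (ρ : Fin m → Fin m) : Prop :=
  ¬ ContainsPat τ ρ

/-- The set of descent positions of `τ` (positions `i` with `τ i > τ (i+1)`). -/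
def descSet {n : ℕ} (τ : Equiv.Perm (Fin n)) : Finset (Fin n) :=
  Finset.univ.filter (fun i => ∃ j : Fin n, (j : ℕ) = (i : ℕ) + 1 ∧ τ j < τ i)

/-! Two descents `i < k` of `τ` give drops `τ (i + 1) < τ i` and `τ (k + 1) < τ k` with
`i + 1 ≤ k`; comparing the values at these three or four positions always exhibits a `321`, a
`2143` or a `3142`. Conversely, each of these patterns has a drop at positions `p < q` followed by
a drop at positions `r < s` with `q ≤ r`, and a drop between two positions of `τ` forces a descent
between them, so an occurrence yields two descents. -/

open Equiv

section
variable {n : ℕ}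

-- `g v` is the position of the entry of `τ` that plays the role of the value `v` of `ρ`.
lemma containsPat_of_strictMono {m : ℕ} {τ : Fin n → Fin n} {ρ : Fin m → Fin m}
    (g : Fin m → Fin n) (hpos : StrictMono (g ∘ ρ)) (hval : StrictMono (τ ∘ g)) :
    ContainsPat τ ρ :=
  ⟨OrderEmbedding.ofStrictMono _ hpos, fun _ _ => hval.lt_iff_lt.symm⟩

variable {τ : Fin n → Fin n} {a b c d : Fin n}

lemma containsPat_321 (hab : a < b) (hbc : b < c) (h₁ : τ c < τ b) (h₂ : τ b < τ a) :
    ContainsPat τ ![2, 1, 0] :=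
  containsPat_of_strictMono ![c, b, a]
    (by simp [Fin.strictMono_iff_lt_succ, Fin.forall_fin_succ, *])
    (by simp [Fin.strictMono_iff_lt_succ, Fin.forall_fin_succ, *])

lemma containsPat_2143 (hab : a < b) (hbc : b < c) (hcd : c < d)
    (h₁ : τ b < τ a) (h₂ : τ a < τ d) (h₃ : τ d < τ c) :
    ContainsPat τ ![1, 0, 3, 2] :=
  containsPat_of_strictMono ![b, a, d, c]
    (by simp [Fin.strictMono_iff_lt_succ, Fin.forall_fin_succ, *])
    (by simp [Fin.strictMono_iff_lt_succ, Fin.forall_fin_succ, *])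

lemma containsPat_3142 (hab : a < b) (hbc : b < c) (hcd : c < d)
    (h₁ : τ b < τ d) (h₂ : τ d < τ a) (h₃ : τ a < τ c) :
    ContainsPat τ ![2, 0, 3, 1] :=
  containsPat_of_strictMono ![b, d, a, c]
    (by simp [Fin.strictMono_iff_lt_succ, Fin.forall_fin_succ, *])
    (by simp [Fin.strictMono_iff_lt_succ, Fin.forall_fin_succ, *])

lemma containsPat_of_two_drops (hτ : Function.Injective τ) (hab : a < b) (hbc : b < c)
    (hcd : c < d) (hba : τ b < τ a) (hdc : τ d < τ c) :
    ContainsPat τ ![2, 1, 0] ∨ ContainsPat τ ![1, 0, 3, 2] ∨ ContainsPat τ ![2, 0, 3, 1] := by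
  rcases lt_or_gt_of_ne (hτ.ne (hbc.trans hcd).ne) with hbd | hdb
  · rcases lt_or_gt_of_ne (hτ.ne (hab.trans hbc).ne) with hac | hca
    · rcases lt_or_gt_of_ne (hτ.ne (hab.trans (hbc.trans hcd)).ne) with had | hda
      · exact .inr (.inl (containsPat_2143 hab hbc hcd hba had hdc))
      · exact .inr (.inr (containsPat_3142 hab hbc hcd hbd hda hac))
    · exact .inl (containsPat_321 (hab.trans hbc) hcd hdc hca)
  · exact .inl (containsPat_321 hab (hbc.trans hcd) hdb hba)

end

section
variable {n : ℕ} {τ : Perm (Fin n)}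

lemma mem_descSet {i : Fin n} :
    i ∈ descSet τ ↔ ∃ j : Fin n, (j : ℕ) = i + 1 ∧ τ j < τ i := by
  simp [descSet]

lemma exists_mem_descSet_of_lt {a b : Fin n} (hab : a < b) (hτ : τ b < τ a) :
    ∃ i ∈ descSet τ, a ≤ i ∧ i < b := by
  obtain ⟨b, hb⟩ := b
  replace hab : (a : ℕ) < b := hab
  induction b with
  | zero => omega
  | succ k ih =>
    set j : Fin n := ⟨k, by omega⟩
    by_cases hdesc : τ ⟨k + 1, hb⟩ < τ j
    · exact ⟨j, mem_descSet.2 ⟨_, rfl, hdesc⟩, Fin.le_def.2 (by simp [j]; omega),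
        Fin.lt_def.2 (by simp [j])⟩
    · have haj : (a : ℕ) < k := by
        refine lt_of_le_of_ne (by omega) fun h => hdesc ?_
        rwa [show j = a from Fin.ext h.symm]
      obtain ⟨i, hi, hai, hij⟩ := ih (by omega) (lt_of_le_of_lt (not_lt.1 hdesc) hτ) haj
      exact ⟨i, hi, hai, lt_trans hij (Fin.lt_def.2 (by simp))⟩

lemma one_lt_card_descSet_of_containsPat {m : ℕ} {ρ : Fin m → Fin m} (h : ContainsPat τ ρ)
    {p q r s : Fin m} (hpq : p < q) (hqr : q ≤ r) (hrs : r < s) (hqp : ρ q < ρ p)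
    (hsr : ρ s < ρ r) : 1 < (descSet τ).card := by
  obtain ⟨f, hf⟩ := h
  obtain ⟨i, hi, -, hiq⟩ := exists_mem_descSet_of_lt (f.lt_iff_lt.2 hpq) ((hf q p).1 hqp)
  obtain ⟨k, hk, hrk, -⟩ := exists_mem_descSet_of_lt (f.lt_iff_lt.2 hrs) ((hf s r).1 hsr)
  exact Finset.one_lt_card.2 ⟨i, hi, k, hk, (hiq.trans_le ((f.le_iff_le.2 hqr).trans hrk)).ne⟩

lemma containsPat_of_lt_of_mem_descSet {i k : Fin n} (hik : i < k) (hi : i ∈ descSet τ)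
    (hk : k ∈ descSet τ) :
    ContainsPat τ ![2, 1, 0] ∨ ContainsPat τ ![1, 0, 3, 2] ∨ ContainsPat τ ![2, 0, 3, 1] := by
  obtain ⟨j, hj, hji⟩ := mem_descSet.1 hi
  obtain ⟨l, hl, hlk⟩ := mem_descSet.1 hk
  have hij : i < j := Fin.lt_def.2 (by omega)
  have hkl : k < l := Fin.lt_def.2 (by omega)
  rcases (show j ≤ k from Fin.le_def.2 (by rw [Fin.lt_def] at hik; omega)).eq_or_lt with rfl | hjk
  · exact .inl (containsPat_321 hij hkl hlk hji)
  · exact containsPat_of_two_drops τ.injective hij hjk hkl hji hlk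

end

theorem stmt6 (n : ℕ) (τ : Equiv.Perm (Fin n)) :
    (descSet τ).card ≤ 1 ↔
      (AvoidsPat (⇑τ) (![2, 1, 0] : Fin 3 → Fin 3) ∧
       AvoidsPat (⇑τ) (![1, 0, 3, 2] : Fin 4 → Fin 4) ∧
       AvoidsPat (⇑τ) (![2, 0, 3, 1] : Fin 4 → Fin 4)) := by
  constructor
  · intro hcard
    refine ⟨fun h => hcard.not_gt ?_, fun h => hcard.not_gt ?_, fun h => hcard.not_gt ?_⟩
    · exact one_lt_card_descSet_of_containsPat h (p := 0) (q := 1) (r := 1) (s := 2)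
        (by decide) le_rfl (by decide) (by decide) (by decide)
    · exact one_lt_card_descSet_of_containsPat h (p := 0) (q := 1) (r := 2) (s := 3)
        (by decide) (by decide) (by decide) (by decide) (by decide)
    · exact one_lt_card_descSet_of_containsPat h (p := 0) (q := 1) (r := 2) (s := 3)
        (by decide) (by decide) (by decide) (by decide) (by decide)
  · rintro ⟨h321, h2143, h3142⟩
    by_contra! hcard
    obtain ⟨i, hi, k, hk, hik⟩ := (Finset.one_lt_card_iff_nontrivial.1 hcard).exists_lt
    rcases containsPat_of_lt_of_mem_descSet hik hi hk with h | h | h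
    exacts [h321 h, h2143 h, h3142 h]
end

section
/- A permutation τ ∈ Sₙ has at most one ascent if and only if τ avoids the patterns 123, 2413, and 3412. -/
/-- The set of ascent positions of `τ` (positions `i` with `τ i < τ (i+1)`). -/
def ascSet {n : ℕ} (τ : Equiv.Perm (Fin n)) : Finset (Fin n) :=
  Finset.univ.filter (fun i => ∃ j : Fin n, (j : ℕ) = (i : ℕ) + 1 ∧ τ i < τ j)

lemma mem_ascSet' {n : ℕ} (τ : Equiv.Perm (Fin n)) (i : Fin n) :
    i ∈ ascSet τ ↔ ∃ j : Fin n, (j : ℕ) = (i : ℕ) + 1 ∧ τ i < τ j := by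
  simp [ascSet]

lemma exists_ascent {n : ℕ} (τ : Equiv.Perm (Fin n)) :
    ∀ m : ℕ, ∀ a b : Fin n, (b : ℕ) = m → a < b → τ a < τ b →
      ∃ k : Fin n, k ∈ ascSet τ ∧ a ≤ k ∧ k < b := by
  intro m
  induction m using Nat.strong_induction_on with
  | _ m ih =>
    intro a b hbm hab hv
    by_cases h : (b : ℕ) = (a : ℕ) + 1
    · exact ⟨a, (mem_ascSet' τ a).mpr ⟨b, h, hv⟩, le_refl a, hab⟩
    · have hb1 : 1 ≤ (b : ℕ) := by
        have := Fin.lt_def.mp hab; omega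
      have hlt : (b : ℕ) - 1 < n := by omega
      set b' : Fin n := ⟨(b : ℕ) - 1, hlt⟩ with hb'
      have hab' : a < b' := by
        have := Fin.lt_def.mp hab
        rw [Fin.lt_def]; simp [hb']; omega
      have hb'b : b' < b := by rw [Fin.lt_def]; simp [hb']; omega
      rcases lt_or_gt_of_ne (fun he : τ b' = τ b => (Fin.ne_of_lt hb'b) (τ.injective he)) with h1 | h1
      · exact ⟨b', (mem_ascSet' τ b').mpr ⟨b, by simp [hb']; omega, h1⟩, le_of_lt hab', hb'b⟩
      · obtain ⟨k, hk, hak, hkb⟩ :=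
          ih ((b:ℕ) - 1) (by omega) a b' (by simp [hb']) hab' (lt_trans hv h1)
        exact ⟨k, hk, hak, lt_trans hkb hb'b⟩

@[reducible] def sel3 {n : ℕ} (a b c : Fin n) : Fin 3 → Fin n :=
  fun j => if j.val = 0 then a else if j.val = 1 then b else c

@[reducible] def sel4 {n : ℕ} (a b c d : Fin n) : Fin 4 → Fin n :=
  fun j => if j.val = 0 then a else if j.val = 1 then b else if j.val = 2 then c else d

lemma sel3mono {n : ℕ} (a b c : Fin n) (h1 : a < b) (h2 : b < c) :
    StrictMono (sel3 a b c) := by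
  intro x y hxy
  fin_cases x <;> fin_cases y <;> first
    | exact absurd hxy (by decide)
    | exact h1
    | exact h2
    | exact h1.trans h2

lemma sel4mono {n : ℕ} (a b c d : Fin n) (h1 : a < b) (h2 : b < c) (h3 : c < d) :
    StrictMono (sel4 a b c d) := by
  intro x y hxy
  fin_cases x <;> fin_cases y <;> first
    | exact absurd hxy (by decide)
    | exact h1
    | exact h2
    | exact h3
    | exact h1.trans h2
    | exact h2.trans h3
    | exact (h1.trans h2).trans h3

lemma contains123 {n : ℕ} (τ : Fin n → Fin n) (a b c : Fin n) (h1 : a < b) (h2 : b < c)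
    (v1 : τ a < τ b) (v2 : τ b < τ c) :
    ContainsPat τ (![0, 1, 2] : Fin 3 → Fin 3) := by
  refine ⟨OrderEmbedding.ofStrictMono _ (sel3mono a b c h1 h2), ?_⟩
  have v3 : τ a < τ c := v1.trans v2
  intro j l
  fin_cases j <;> fin_cases l <;>
    first
    | exact iff_of_true (by decide) (by assumption)
    | exact iff_of_false (by decide) (lt_irrefl _)
    | exact iff_of_false (by decide) (asymm (show _ < _ by assumption))

lemma contains2413 {n : ℕ} (τ : Fin n → Fin n) (a b c d : Fin n)
    (h1 : a < b) (h2 : b < c) (h3 : c < d)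
    (v1 : τ c < τ a) (v2 : τ a < τ d) (v3 : τ d < τ b) :
    ContainsPat τ (![1, 3, 0, 2] : Fin 4 → Fin 4) := by
  refine ⟨OrderEmbedding.ofStrictMono _ (sel4mono a b c d h1 h2 h3), ?_⟩
  have v4 : τ c < τ d := v1.trans v2
  have v5 : τ a < τ b := v2.trans v3
  have v6 : τ c < τ b := v4.trans v3
  intro j l
  fin_cases j <;> fin_cases l <;>
    first
    | exact iff_of_true (by decide) (by assumption)
    | exact iff_of_false (by decide) (lt_irrefl _)
    | exact iff_of_false (by decide) (asymm (show _ < _ by assumption))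

lemma contains3412 {n : ℕ} (τ : Fin n → Fin n) (a b c d : Fin n)
    (h1 : a < b) (h2 : b < c) (h3 : c < d)
    (v1 : τ c < τ d) (v2 : τ d < τ a) (v3 : τ a < τ b) :
    ContainsPat τ (![2, 3, 0, 1] : Fin 4 → Fin 4) := by
  refine ⟨OrderEmbedding.ofStrictMono _ (sel4mono a b c d h1 h2 h3), ?_⟩
  have v4 : τ c < τ a := v1.trans v2
  have v5 : τ d < τ b := v2.trans v3
  have v6 : τ c < τ b := v4.trans v3
  intro j l
  fin_cases j <;> fin_cases l <;>
    first
    | exact iff_of_true (by decide) (by assumption)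
    | exact iff_of_false (by decide) (lt_irrefl _)
    | exact iff_of_false (by decide) (asymm (show _ < _ by assumption))

lemma two_asc {n : ℕ} (τ : Equiv.Perm (Fin n))
    (i j : Fin n) (hi : i ∈ ascSet τ) (hj : j ∈ ascSet τ) (hij : i < j) :
    ContainsPat (⇑τ) (![0, 1, 2] : Fin 3 → Fin 3) ∨
    ContainsPat (⇑τ) (![1, 3, 0, 2] : Fin 4 → Fin 4) ∨
    ContainsPat (⇑τ) (![2, 3, 0, 1] : Fin 4 → Fin 4) := by
  obtain ⟨i', hi'1, hi'2⟩ := (mem_ascSet' τ i).mp hi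
  obtain ⟨j', hj'1, hj'2⟩ := (mem_ascSet' τ j).mp hj
  have hijn : (i : ℕ) < (j : ℕ) := Fin.lt_def.mp hij
  have hjj' : j < j' := by rw [Fin.lt_def]; omega
  have hii' : i < i' := by rw [Fin.lt_def]; omega
  by_cases hc : (i' : ℕ) = (j : ℕ)
  · have hij' : i' = j := Fin.ext hc
    subst hij'
    exact Or.inl (contains123 (⇑τ) i i' j' hii' hjj' hi'2 hj'2)
  · have hi'j : i' < j := by rw [Fin.lt_def]; omega
    rcases lt_trichotomy (τ i) (τ j) with h1 | h1 | h1
    · exact Or.inl (contains123 (⇑τ) i j j' (hii'.trans hi'j) hjj' h1 hj'2)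
    · exact absurd (τ.injective h1) (Fin.ne_of_lt (hii'.trans hi'j))
    · rcases lt_trichotomy (τ i') (τ j') with h2 | h2 | h2
      · exact Or.inl (contains123 (⇑τ) i i' j' hii' (hi'j.trans hjj') hi'2 h2)
      · exact absurd (τ.injective h2) (Fin.ne_of_lt (hi'j.trans hjj'))
      · rcases lt_trichotomy (τ i) (τ j') with h3 | h3 | h3
        · exact Or.inr (Or.inl (contains2413 (⇑τ) i i' j j' hii' hi'j hjj' h1 h3 h2))
        · exact absurd (τ.injective h3) (Fin.ne_of_lt ((hii'.trans hi'j).trans hjj'))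
        · exact Or.inr (Or.inr (contains3412 (⇑τ) i i' j j' hii' hi'j hjj' hj'2 h3 hi'2))

theorem stmt7 (n : ℕ) (τ : Equiv.Perm (Fin n)) :
    (ascSet τ).card ≤ 1 ↔
      (AvoidsPat (⇑τ) (![0, 1, 2] : Fin 3 → Fin 3) ∧
       AvoidsPat (⇑τ) (![1, 3, 0, 2] : Fin 4 → Fin 4) ∧
       AvoidsPat (⇑τ) (![2, 3, 0, 1] : Fin 4 → Fin 4)) := by
  constructor
  · intro hcard
    have key : ∀ (a b c : Fin n), a < b → b < c → τ a < τ b → τ b < τ c → False := by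
      intro a b c hab hbc v1 v2
      obtain ⟨k1, hk1, _, hk1b⟩ := exists_ascent τ (b : ℕ) a b rfl hab v1
      obtain ⟨k2, hk2, hbk2, _⟩ := exists_ascent τ (c : ℕ) b c rfl hbc v2
      have : k1 = k2 := Finset.card_le_one.mp hcard k1 hk1 k2 hk2
      exact absurd (lt_of_lt_of_le hk1b hbk2) (this ▸ lt_irrefl k1)
    refine ⟨?_, ?_, ?_⟩
    · rintro ⟨f, hf⟩
      have h01 : f 0 < f 1 := f.strictMono (by decide : (0 : Fin 3) < 1)
      have h12 : f 1 < f 2 := f.strictMono (by decide : (1 : Fin 3) < 2)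
      have v1 : τ (f 0) < τ (f 1) := (hf 0 1).mp (by decide)
      have v2 : τ (f 1) < τ (f 2) := (hf 1 2).mp (by decide)
      exact key _ _ _ h01 h12 v1 v2
    · rintro ⟨f, hf⟩
      have h01 : f 0 < f 1 := f.strictMono (by decide : (0 : Fin 4) < 1)
      have h12 : f 1 < f 2 := f.strictMono (by decide : (1 : Fin 4) < 2)
      have h23 : f 2 < f 3 := f.strictMono (by decide : (2 : Fin 4) < 3)
      -- pattern 1 3 0 2 : τ(f2) < τ(f0) < τ(f3) < τ(f1)
      have v20 : τ (f 2) < τ (f 0) := (hf 2 0).mp (by decide)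
      have v03 : τ (f 0) < τ (f 3) := (hf 0 3).mp (by decide)
      have v31 : τ (f 3) < τ (f 1) := (hf 3 1).mp (by decide)
      -- ascent in [f0, f1) and in [f2, f3)
      obtain ⟨k1, hk1, _, hk1b⟩ := exists_ascent τ ((f 1 : Fin n) : ℕ) (f 0) (f 1) rfl h01 (v03.trans v31)
      obtain ⟨k2, hk2, hbk2, _⟩ := exists_ascent τ ((f 3 : Fin n) : ℕ) (f 2) (f 3) rfl h23 (v20.trans v03)
      have heq : k1 = k2 := Finset.card_le_one.mp hcard k1 hk1 k2 hk2
      have hlt : k1 < k2 := lt_of_lt_of_le hk1b (h12.le.trans hbk2)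
      exact absurd heq (Fin.ne_of_lt hlt)
    · rintro ⟨f, hf⟩
      have h01 : f 0 < f 1 := f.strictMono (by decide : (0 : Fin 4) < 1)
      have h23 : f 2 < f 3 := f.strictMono (by decide : (2 : Fin 4) < 3)
      have h12 : f 1 < f 2 := f.strictMono (by decide : (1 : Fin 4) < 2)
      -- pattern 2 3 0 1 : τ(f2) < τ(f3) < τ(f0) < τ(f1)
      have v01 : τ (f 0) < τ (f 1) := (hf 0 1).mp (by decide)
      have v23 : τ (f 2) < τ (f 3) := (hf 2 3).mp (by decide)
      obtain ⟨k1, hk1, _, hk1b⟩ := exists_ascent τ ((f 1 : Fin n) : ℕ) (f 0) (f 1) rfl h01 v01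
      obtain ⟨k2, hk2, hbk2, _⟩ := exists_ascent τ ((f 3 : Fin n) : ℕ) (f 2) (f 3) rfl h23 v23
      have heq : k1 = k2 := Finset.card_le_one.mp hcard k1 hk1 k2 hk2
      have hlt : k1 < k2 := lt_of_lt_of_le (lt_of_lt_of_le hk1b h12.le) hbk2
      exact absurd heq (Fin.ne_of_lt hlt)
  · rintro ⟨H1, H2, H3⟩
    by_contra hcard
    have hc2 : 1 < (ascSet τ).card := by omega
    obtain ⟨i, hi, j, hj, hne⟩ := Finset.one_lt_card.mp hc2
    rcases hne.lt_or_gt with h | h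
    · rcases two_asc τ i j hi hj h with hx | hx | hx
      exacts [H1 hx, H2 hx, H3 hx]
    · rcases two_asc τ j i hj hi h with hx | hx | hx
      exacts [H1 hx, H2 hx, H3 hx]
end

section
/- For n ≥ 2, the number of n-cycles τ in Sₙ with exactly one descent equals (1/n)·∑_{d|n} μ(d)·2^{n/d}. -/
/-- `τ` is an `n`-cycle: it acts as a single cycle on all of `Fin n`. -/
def IsNCycle {n : ℕ} (τ : Equiv.Perm (Fin n)) : Prop :=
  τ.IsCycleOn Set.univ

/-!
Encode a pair `(r, τ)`, with `τ` an `n`-cycle whose only descent is at `k`, by the binary word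
`j ↦ [k < τ^j r]` on `ℤ/n`. Since `τ` is increasing on `[0, k]` and on `(k, n)`, two points keep
their order under `τ` while they lie on the same side of `k`; hence the itinerary
`a ↦ ([k < τ^m a])_m` is strictly increasing for the lexicographic order. So the rotations of
the word are pairwise distinct (the word is primitive) and their lexicographic ranks recover the
orbit `j ↦ τ^j r`, hence `r` and `τ`.

Conversely, for a primitive word `w` rank its `n` rotations lexicographically and let `τ` send
the rank of rotation `j` to the rank of rotation `j + 1`: an `n`-cycle. Rotations starting with
`0` come first, and shifting preserves the order of two rotations with the same first letter, so
the only descent of `τ` is at (number of zeros) `- 1`. Thus `n · #cycles = #primitive words`,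
and sorting all `2^n` words by minimal period gives `∑_{d ∣ n} #primitive(d) = 2^n`, which
Möbius inversion turns into the formula.
-/

open Finset Function

section Words

variable {α : Type*} {n : ℕ}

def rotate (w : ZMod n → α) : ZMod n → α := fun j => w (j + 1)

lemma iterate_rotate (w : ZMod n → α) (m : ℕ) : rotate^[m] w = fun j => w (j + m) := by
  induction m generalizing w with
  | zero => simp
  | succ m ih =>
    funext j
    rw [iterate_succ_apply, ih]
    simp only [rotate, Nat.cast_succ, add_assoc]

lemma isPeriodicPt_rotate_iff {w : ZMod n → α} {m : ℕ} :
    IsPeriodicPt rotate m w ↔ ∀ j, w (j + m) = w j := by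
  rw [IsPeriodicPt, IsFixedPt, iterate_rotate, funext_iff]

lemma isPeriodicPt_rotate_self (w : ZMod n → α) : IsPeriodicPt rotate n w :=
  isPeriodicPt_rotate_iff.2 fun j => by rw [ZMod.natCast_self, add_zero]

def IsPrimitive (w : ZMod n → α) : Prop := minimalPeriod rotate w = n

section Extend

variable {d : ℕ} (hd : d ∣ n)

def extendWord (u : ZMod d → α) : ZMod n → α := u ∘ ZMod.castHom hd (ZMod d)

lemma semiconj_extendWord : Semiconj (extendWord (α := α) hd) rotate rotate := fun u => by
  funext j
  simp only [extendWord, rotate, comp_apply, map_add, map_one]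

lemma extendWord_injective : Injective (extendWord (α := α) hd) :=
  (ZMod.ringHom_surjective _).injective_comp_right

lemma minimalPeriod_extendWord (u : ZMod d → α) :
    minimalPeriod rotate (extendWord hd u) = minimalPeriod rotate u :=
  minimalPeriod_eq_minimalPeriod_iff.2 fun m => by
    simp only [IsPeriodicPt, IsFixedPt]
    rw [← (semiconj_extendWord hd).iterate_right m u, (extendWord_injective hd).eq_iff]

lemma apply_eq_of_castHom_eq [NeZero n] {w : ZMod n → α} (hw : IsPeriodicPt rotate d w)
    {x y : ZMod n} (hxy : ZMod.castHom hd (ZMod d) x = ZMod.castHom hd (ZMod d) y) :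
    w x = w y := by
  have hdvd : d ∣ (x - y).val := by
    rw [← ZMod.natCast_eq_zero_iff, ← map_natCast (ZMod.castHom hd (ZMod d)),
      ZMod.natCast_zmod_val, map_sub, hxy, sub_self]
  obtain ⟨c, hc⟩ := hdvd
  have := isPeriodicPt_rotate_iff.1 (hw.mul_const c) y
  rwa [← hc, ZMod.natCast_zmod_val, add_sub_cancel] at this

lemma exists_extendWord_eq [NeZero n] [NeZero d] {w : ZMod n → α}
    (hw : IsPeriodicPt rotate d w) : ∃ u, extendWord hd u = w :=
  ⟨fun i => w i.val, funext fun x => apply_eq_of_castHom_eq hd hw (by simp)⟩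

end Extend

lemma card_minimalPeriod_rotate_eq {d : ℕ} [NeZero n] [NeZero d] (hd : d ∣ n) :
    Nat.card {w : ZMod n → α // minimalPeriod rotate w = d} =
      Nat.card {u : ZMod d → α // IsPrimitive u} := by
  refine (Nat.card_eq_of_bijective
    (fun u => ⟨extendWord hd u.1, (minimalPeriod_extendWord hd u.1).trans u.2⟩) ⟨?_, ?_⟩).symm
  · exact fun u v h => Subtype.ext (extendWord_injective hd (congrArg Subtype.val h))
  · rintro ⟨w, hw⟩
    obtain ⟨u, rfl⟩ := exists_extendWord_eq hd (hw ▸ isPeriodicPt_minimalPeriod rotate w)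
    exact ⟨⟨u, (minimalPeriod_extendWord hd u).symm.trans hw⟩, rfl⟩

theorem sum_card_isPrimitive [Fintype α] (hn : n ≠ 0) :
    ∑ d ∈ n.divisors, Nat.card {u : ZMod d → α // IsPrimitive u} = Fintype.card α ^ n := by
  classical
  have : NeZero n := ⟨hn⟩
  have hfib := card_eq_sum_card_fiberwise (s := univ) (t := n.divisors)
    (f := minimalPeriod (rotate (α := α) (n := n))) fun w _ =>
      Nat.mem_divisors.2 ⟨(isPeriodicPt_rotate_self w).minimalPeriod_dvd, hn⟩
  rw [card_univ, Fintype.card_fun, ZMod.card] at hfib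
  rw [hfib]
  refine sum_congr rfl fun d hd => ?_
  have hdn := Nat.dvd_of_mem_divisors hd
  have : NeZero d := ⟨ne_zero_of_dvd_ne_zero hn hdn⟩
  rw [← card_minimalPeriod_rotate_eq hdn, Nat.card_eq_fintype_card, Fintype.card_subtype]

theorem card_isPrimitive_eq_sum_moebius [Fintype α] (hn : n ≠ 0) :
    (Nat.card {u : ZMod n → α // IsPrimitive u} : ℤ) =
      ∑ d ∈ n.divisors, ArithmeticFunction.moebius d * (Fintype.card α : ℤ) ^ (n / d) := by
  have hinv := (ArithmeticFunction.sum_eq_iff_sum_smul_moebius_eq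
    (f := fun d => (Nat.card {u : ZMod d → α // IsPrimitive u} : ℤ))
    (g := fun m => (Fintype.card α : ℤ) ^ m)).1
    (fun m hm => by exact_mod_cast sum_card_isPrimitive (α := α) hm.ne') n (Nat.pos_of_ne_zero hn)
  rw [← hinv, Nat.sum_divisorsAntidiagonal
    (fun a b => ArithmeticFunction.moebius a • (Fintype.card α : ℤ) ^ b)]
  simp only [zsmul_eq_mul, Int.cast_id]

end Words

section Descents

variable {n : ℕ} {τ : Equiv.Perm (Fin n)}

lemma notMem_descSet_iff {i : Fin n} :
    i ∉ descSet τ ↔ ∀ hi : (i : ℕ) + 1 < n, τ i < τ ⟨i + 1, hi⟩ := by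
  simp only [descSet, mem_filter, mem_univ, true_and, not_exists, not_and, not_lt]
  constructor
  · exact fun h hi => (h _ rfl).lt_of_ne (τ.injective.ne (Fin.ne_of_val_ne (by simp)))
  · rintro h ⟨j, hj⟩ rfl
    exact (h hj).le

lemma apply_lt_apply_of_forall_notMem_descSet {a b : Fin n} (hab : a < b)
    (h : ∀ i, a ≤ i → i < b → i ∉ descSet τ) : τ a < τ b := by
  obtain ⟨b, hb⟩ := b
  induction b with
  | zero => exact absurd (Fin.lt_def.1 hab) (Nat.not_lt_zero _)
  | succ m ih =>
    have hm : m < n := by omega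
    replace hab : (a : ℕ) < m + 1 := hab
    have hstep := notMem_descSet_iff.1 (h ⟨m, hm⟩ (Fin.le_def.2 (by simp only; omega))
      (Fin.lt_def.2 (by simp))) hb
    rcases Nat.lt_or_ge (a : ℕ) m with hlt | hge
    · refine (ih hm (Fin.lt_def.2 hlt) fun i hai hib => h i hai ?_).trans hstep
      rw [Fin.lt_def] at hib ⊢
      simp only at hib ⊢
      omega
    · rwa [show a = ⟨m, hm⟩ from Fin.ext (by simp only; omega)]

lemma eq_one_of_descSet_eq_empty (h : descSet τ = ∅) : τ = 1 :=
  Equiv.ext (congrFun (StrictMono.eq_id fun _ _ hab =>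
    apply_lt_apply_of_forall_notMem_descSet hab fun i _ _ => h ▸ notMem_empty i))

lemma apply_lt_apply_of_descSet_eq_singleton {k a b : Fin n} (h : descSet τ = {k})
    (hab : a < b) (hside : a ≤ k ↔ b ≤ k) : τ a < τ b := by
  refine apply_lt_apply_of_forall_notMem_descSet hab fun i hai hib hik => ?_
  rw [h, mem_singleton] at hik
  subst hik
  exact absurd (hside.1 hai) (not_le.2 hib)

end Descents

section Cycles

variable {n : ℕ} {τ : Equiv.Perm (Fin n)}

namespace IsNCycle

variable (hc : IsNCycle τ)
include hc

lemma exists_pow_eq (a b : Fin n) : ∃ m : ℕ, (τ ^ m) a = b := by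
  obtain ⟨m, -, hm⟩ := Equiv.Perm.IsCycleOn.exists_pow_eq (s := univ) (by rwa [coe_univ])
    (mem_univ a) (mem_univ b)
  exact ⟨m, hm⟩

lemma pow_eq_one : τ ^ n = 1 :=
  Equiv.ext fun a => by
    simpa using Equiv.Perm.IsCycleOn.pow_card_apply (s := univ) (by rwa [coe_univ]) (mem_univ a)

end IsNCycle

def orbit (τ : Equiv.Perm (Fin n)) (r : Fin n) (j : ZMod n) : Fin n := (τ ^ j.val) r

section Orbit
variable (hc : IsNCycle τ) (r : Fin n)
include hc

lemma orbit_natCast (m : ℕ) : orbit τ r m = (τ ^ m) r := by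
  rw [orbit, ZMod.val_natCast, ← pow_eq_pow_mod m hc.pow_eq_one]

lemma orbit_add_natCast [NeZero n] (j : ZMod n) (m : ℕ) :
    orbit τ r (j + m) = (τ ^ m) (orbit τ r j) := by
  rw [← ZMod.natCast_zmod_val j, ← Nat.cast_add, orbit_natCast hc, orbit_natCast hc, add_comm,
    pow_add, Equiv.Perm.mul_apply]

lemma orbit_bijective [NeZero n] : Bijective (orbit τ r) := by
  rw [Fintype.bijective_iff_surjective_and_card, ZMod.card, Fintype.card_fin]
  refine ⟨fun b => ?_, rfl⟩
  obtain ⟨m, hm⟩ := hc.exists_pow_eq r b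
  exact ⟨m, by rw [orbit_natCast hc, hm]⟩

end Orbit

def itinerary (τ : Equiv.Perm (Fin n)) (k a : Fin n) : Lex (ℕ → Bool) :=
  toLex fun m => decide (k < (τ ^ m) a)

theorem strictMono_itinerary {k : Fin n} (hc : IsNCycle τ) (hk : descSet τ = {k}) :
    StrictMono (itinerary τ k) := by
  intro a b hab
  let SameSide m := ((τ ^ m) a ≤ k ↔ (τ ^ m) b ≤ k)
  have hlt : ∀ m, (∀ j < m, SameSide j) → (τ ^ m) a < (τ ^ m) b := by
    intro m
    induction m with
    | zero => exact fun _ => hab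
    | succ m ih =>
      intro hsame
      rw [pow_succ', Equiv.Perm.mul_apply, Equiv.Perm.mul_apply]
      exact apply_lt_apply_of_descSet_eq_singleton hk (ih fun j hj => hsame j (by omega))
        (hsame m (by omega))
  -- some iterate of `a` is the top element `n - 1`, which the same iterate of `b` cannot exceed
  have hex : ∃ m, ¬ SameSide m := by
    by_contra! hall
    obtain ⟨m, hm⟩ := hc.exists_pow_eq a ⟨n - 1, by omega⟩
    have htop : (τ ^ m) a < (τ ^ m) b := hlt m fun j _ => hall j
    rw [hm, Fin.lt_def, Fin.val_mk] at htop
    have := ((τ ^ m) b).isLt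
    omega
  classical
  have hsame : ∀ j < Nat.find hex, SameSide j := fun j hj => not_not.1 (Nat.find_min hex hj)
  have hm := hlt _ hsame
  have hdiff : ¬ SameSide (Nat.find hex) := Nat.find_spec hex
  have hb : k < (τ ^ Nat.find hex) b :=
    not_le.1 fun hb => hdiff ⟨fun _ => hb, fun _ => hm.le.trans hb⟩
  have ha : (τ ^ Nat.find hex) a ≤ k :=
    not_lt.1 fun ha => hdiff (iff_of_false (not_le.2 ha) (not_le.2 hb))
  refine ⟨Nat.find hex, fun j hj => ?_, ?_⟩
  · simp only [itinerary, Pi.toLex_apply, decide_eq_decide, ← not_le]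
    exact (hsame j hj).not
  · simp [itinerary, hb, not_lt.2 ha]

end Cycles

section Rank

variable {ι L : Type*} [Fintype ι] [LinearOrder L]

def rank (X : ι → L) (j : ι) : ℕ := #{i | X i < X j}

lemma rank_comp_of_strictMono {n : ℕ} (e : ι ≃ Fin n) {g : Fin n → L} (hg : StrictMono g)
    (j : ι) : rank (g ∘ e) j = e j := by
  rw [rank, ← Fin.card_Iio (e j), ← card_map e.toEmbedding]
  congr 1
  ext i
  simp [hg.lt_iff_lt]

variable {X : ι → L}

lemma rank_lt_card (j : ι) : rank X j < Fintype.card ι :=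
  card_lt_univ_of_notMem (x := j) (by simp)

lemma rank_lt_rank {i j : ι} (h : X i < X j) : rank X i < rank X j :=
  card_lt_card <| (ssubset_iff_of_subset fun x hx => by
    simp only [mem_filter, mem_univ, true_and] at hx ⊢; exact hx.trans h).2
    ⟨i, by simpa using h, by simp⟩

lemma rank_lt_rank_iff (hX : Injective X) {i j : ι} : rank X i < rank X j ↔ X i < X j :=
  ⟨fun h => (lt_or_gt_of_ne fun he => h.ne (by rw [hX he])).resolve_right
    fun h' => h.not_gt (rank_lt_rank h'), rank_lt_rank⟩

lemma rank_injective (hX : Injective X) : Injective (rank X) := fun _ _ h =>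
  hX <| le_antisymm (not_lt.1 fun h' => (rank_lt_rank h').ne' h)
    (not_lt.1 fun h' => (rank_lt_rank h').ne h)

noncomputable def rankEquiv (hX : Injective X) {n : ℕ} (hn : Fintype.card ι = n) : ι ≃ Fin n :=
  Equiv.ofBijective (fun j => ⟨rank X j, hn ▸ rank_lt_card j⟩) <| by
    rw [Fintype.bijective_iff_injective_and_card, Fintype.card_fin]
    exact ⟨fun _ _ h => rank_injective hX (congrArg Fin.val h), hn⟩

lemma rankEquiv_lt_rankEquiv_iff (hX : Injective X) {n : ℕ} (hn : Fintype.card ι = n)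
    {i j : ι} : rankEquiv hX hn i < rankEquiv hX hn j ↔ X i < X j :=
  rank_lt_rank_iff hX

end Rank

section Rotations

variable {α : Type*} {n : ℕ}

def rotations (w : ZMod n → α) (j : ZMod n) : Lex (ℕ → α) := toLex fun m => w (j + m)

lemma isPrimitive_iff_injective_rotations [NeZero n] {w : ZMod n → α} :
    IsPrimitive w ↔ Injective (rotations w) := by
  constructor
  · intro hw i j hij
    have hper : IsPeriodicPt rotate (j - i).val w := isPeriodicPt_rotate_iff.2 fun x => by
      have := congrFun (congrArg ofLex hij) (x - i).val
      simp only [rotations, ofLex_toLex, ZMod.natCast_zmod_val] at this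
      rw [ZMod.natCast_zmod_val]
      convert this.symm using 2 <;> ring
    have hdvd := hw ▸ hper.minimalPeriod_dvd
    rw [← ZMod.natCast_eq_zero_iff, ZMod.natCast_zmod_val, sub_eq_zero] at hdvd
    exact hdvd.symm
  · intro hinj
    have hper := isPeriodicPt_minimalPeriod rotate w
    have h0 : rotations w (minimalPeriod rotate w) = rotations w 0 :=
      congrArg toLex <| funext fun m => by
        rw [zero_add, add_comm]
        exact isPeriodicPt_rotate_iff.1 hper _
    exact Nat.dvd_antisymm ((isPeriodicPt_rotate_self w).minimalPeriod_dvd)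
      ((ZMod.natCast_eq_zero_iff _ _).1 (hinj h0))

end Rotations

section CycleWord

variable {n : ℕ} {τ : Equiv.Perm (Fin n)} {k : Fin n}

def cycleWord (τ : Equiv.Perm (Fin n)) (k r : Fin n) (j : ZMod n) : Bool :=
  decide (k < orbit τ r j)

variable [NeZero n] (hc : IsNCycle τ) (hk : descSet τ = {k}) (r : Fin n)
include hc

lemma rotations_cycleWord : rotations (cycleWord τ k r) = itinerary τ k ∘ orbit τ r :=
  funext fun j => congrArg toLex <| funext fun m => by
    simp only [cycleWord, orbit_add_natCast hc]

include hk

lemma injective_rotations_cycleWord : Injective (rotations (cycleWord τ k r)) := by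
  rw [rotations_cycleWord hc]
  exact (strictMono_itinerary hc hk).injective.comp (orbit_bijective hc r).injective

lemma rank_rotations_cycleWord (j : ZMod n) :
    rank (rotations (cycleWord τ k r)) j = orbit τ r j := by
  rw [rotations_cycleWord hc]
  exact rank_comp_of_strictMono (Equiv.ofBijective _ (orbit_bijective hc r))
    (strictMono_itinerary hc hk) j

end CycleWord

section WordPerm

variable {n : ℕ} {w : ZMod n → Bool}

lemma rotations_lt_rotations_of_eq_false {i j : ZMod n} (hi : w i = false) (hj : w j = true) :
    rotations w i < rotations w j :=
  ⟨0, fun _ h => absurd h (Nat.not_lt_zero _), by simp [rotations, hi, hj]⟩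

lemma rotations_add_one_lt {i j : ZMod n} (h : rotations w i < rotations w j) (hij : w i = w j) :
    rotations w (i + 1) < rotations w (j + 1) := by
  obtain ⟨m, hlt, hm⟩ := h
  cases m with
  | zero => simp [rotations, hij] at hm
  | succ m =>
    refine ⟨m, fun l hl => ?_, ?_⟩
    · simpa [rotations, add_assoc, add_comm (1 : ZMod n)] using hlt (l + 1) (by omega)
    · simpa [rotations, add_assoc, add_comm (1 : ZMod n)] using hm

variable [NeZero n] (hw : Injective (rotations w))

noncomputable def wordRank : ZMod n ≃ Fin n := rankEquiv hw (ZMod.card n)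

noncomputable def wordPerm : Equiv.Perm (Fin n) := (wordRank hw).permCongr (Equiv.addRight 1)

lemma wordPerm_wordRank (j : ZMod n) : wordPerm hw (wordRank hw j) = wordRank hw (j + 1) := by
  simp [wordPerm]

lemma wordPerm_pow_wordRank (m : ℕ) (j : ZMod n) :
    (wordPerm hw ^ m) (wordRank hw j) = wordRank hw (j + m) := by
  induction m with
  | zero => simp
  | succ m ih =>
    rw [pow_succ', Equiv.Perm.mul_apply, ih, wordPerm_wordRank, Nat.cast_succ, add_assoc]

lemma isNCycle_wordPerm : IsNCycle (wordPerm hw) := by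
  refine ⟨(wordPerm hw).bijective.bijOn_univ, fun a _ b _ => ?_⟩
  obtain ⟨i, rfl⟩ := (wordRank hw).surjective a
  obtain ⟨j, rfl⟩ := (wordRank hw).surjective b
  exact ⟨(j - i).val, by
    rw [zpow_natCast, wordPerm_pow_wordRank, ZMod.natCast_zmod_val, add_sub_cancel]⟩

end WordPerm

section WordDescent

variable {n : ℕ} [NeZero n] {w : ZMod n → Bool} (hw : Injective (rotations w))

lemma wordRank_lt_wordRank_iff {i j : ZMod n} :
    wordRank hw i < wordRank hw j ↔ rotations w i < rotations w j :=
  rankEquiv_lt_rankEquiv_iff hw _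

lemma eq_false_iff_wordRank_lt {j : ZMod n} :
    w j = false ↔ (wordRank hw j : ℕ) < #{i | w i = false} := by
  change _ ↔ rank (rotations w) j < _
  constructor
  · intro hj
    refine card_lt_card ((ssubset_iff_of_subset fun i hi => ?_).2 ⟨j, by simp [hj], by simp⟩)
    simp only [mem_filter, mem_univ, true_and] at hi ⊢
    by_contra h
    exact (rotations_lt_rotations_of_eq_false hj (Bool.not_eq_false _ ▸ h)).not_gt hi
  · intro hlt
    by_contra hj
    refine hlt.not_ge (card_le_card fun i hi => ?_)
    simp only [mem_filter, mem_univ, true_and] at hi ⊢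
    exact rotations_lt_rotations_of_eq_false hi (Bool.not_eq_false _ ▸ hj)

variable (w) in
def wordDescent : Fin n :=
  ⟨#{i | w i = false} - 1, by
    have := card_le_univ (univ.filter fun i => w i = false)
    rw [ZMod.card] at this
    have := NeZero.pos n
    omega⟩

lemma notMem_descSet_wordPerm {i : Fin n} (hi : i ≠ wordDescent w) :
    i ∉ descSet (wordPerm hw) := by
  refine notMem_descSet_iff.2 fun hi' => ?_
  obtain ⟨p, hp⟩ := (wordRank hw).surjective i
  obtain ⟨q, hq⟩ := (wordRank hw).surjective ⟨i + 1, hi'⟩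
  have hpq : rotations w p < rotations w q := (wordRank_lt_wordRank_iff hw).1 (by
    rw [hp, hq, Fin.lt_def]; simp)
  have hsame : w p = w q := by
    have hne : (i : ℕ) ≠ #{i | w i = false} - 1 := fun h => hi (Fin.ext h)
    have : w p = false ↔ w q = false := by
      rw [eq_false_iff_wordRank_lt hw, eq_false_iff_wordRank_lt hw, hp, hq]
      simp only
      omega
    cases hwp : w p <;> cases hwq : w q <;> simp_all
  rw [← hq, ← hp, wordPerm_wordRank, wordPerm_wordRank, wordRank_lt_wordRank_iff]
  exact rotations_add_one_lt hpq hsame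

variable (hn : 2 ≤ n)
include hw hn

lemma wordPerm_ne_one : wordPerm hw ≠ 1 := by
  have : Fact (1 < n) := ⟨hn⟩
  intro h
  have := wordPerm_wordRank hw 0
  rw [h, Equiv.Perm.one_apply, (wordRank hw).apply_eq_iff_eq, zero_add] at this
  exact zero_ne_one this

lemma descSet_wordPerm : descSet (wordPerm hw) = {wordDescent w} :=
  (subset_singleton_iff.1 fun _ hi => mem_singleton.2 (not_not.1 fun h =>
    notMem_descSet_wordPerm hw h hi)).resolve_left fun h =>
      wordPerm_ne_one hw hn (eq_one_of_descSet_eq_empty h)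

lemma exists_eq_false_of_injective_rotations : ∃ j, w j = false := by
  have : Fact (1 < n) := ⟨hn⟩
  by_contra! h
  refine zero_ne_one (hw (congrArg toLex (funext fun m => ?_)) : (0 : ZMod n) = 1)
  simp [Bool.not_eq_false] at h
  simp [h]

lemma cycleWord_wordPerm : cycleWord (wordPerm hw) (wordDescent w) (wordRank hw 0) = w := by
  obtain ⟨j₀, hj₀⟩ := exists_eq_false_of_injective_rotations hw hn
  have hpos := ((eq_false_iff_wordRank_lt hw).1 hj₀).trans_le' (Nat.zero_le _)
  funext j
  rw [cycleWord, orbit, wordPerm_pow_wordRank, zero_add, ZMod.natCast_zmod_val]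
  have hj := eq_false_iff_wordRank_lt hw (j := j)
  cases hwj : w j
  · rw [decide_eq_false_iff_not, Fin.lt_def, not_lt]
    have := hj.1 hwj
    simp only [wordDescent]
    omega
  · rw [decide_eq_true_iff, Fin.lt_def]
    have := hj.not.1 (by simp [hwj])
    simp only [wordDescent]
    omega

end WordDescent

section Inverse

variable {n : ℕ}

noncomputable def descentOf {τ : Equiv.Perm (Fin n)} (h : #(descSet τ) = 1) : Fin n :=
  (card_eq_one.1 h).choose

lemma descSet_eq_singleton_descentOf {τ : Equiv.Perm (Fin n)} (h : #(descSet τ) = 1) :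
    descSet τ = {descentOf h} :=
  (card_eq_one.1 h).choose_spec

lemma descentOf_eq {τ : Equiv.Perm (Fin n)} {k : Fin n} {h : #(descSet τ) = 1}
    (hk : descSet τ = {k}) : descentOf h = k :=
  singleton_injective ((descSet_eq_singleton_descentOf h).symm.trans hk)

variable [NeZero n] {τ : Equiv.Perm (Fin n)} {k r : Fin n} (hc : IsNCycle τ)
  (hk : descSet τ = {k}) (hw : Injective (rotations (cycleWord τ k r)))
include hc hk

lemma wordRank_cycleWord (j : ZMod n) : wordRank hw j = orbit τ r j :=
  Fin.ext (rank_rotations_cycleWord hc hk r j)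

lemma wordPerm_cycleWord : wordPerm hw = τ := by
  refine Equiv.ext fun a => ?_
  obtain ⟨j, rfl⟩ := (wordRank hw).surjective a
  have := orbit_add_natCast hc r j 1
  rw [Nat.cast_one, pow_one] at this
  rw [wordPerm_wordRank, wordRank_cycleWord hc hk, wordRank_cycleWord hc hk, this]

end Inverse

noncomputable def primitiveWordEquiv {n : ℕ} [NeZero n] (hn : 2 ≤ n) :
    Fin n × {τ : Equiv.Perm (Fin n) // IsNCycle τ ∧ #(descSet τ) = 1} ≃
      {w : ZMod n → Bool // IsPrimitive w} where
  toFun p := ⟨cycleWord p.2.1 (descentOf p.2.2.2) p.1, isPrimitive_iff_injective_rotations.2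
    (injective_rotations_cycleWord p.2.2.1 (descSet_eq_singleton_descentOf _) _)⟩
  invFun w :=
    have hw := isPrimitive_iff_injective_rotations.1 w.2
    (wordRank hw 0, ⟨wordPerm hw, isNCycle_wordPerm hw, by
      rw [descSet_wordPerm hw hn, card_singleton]⟩)
  left_inv := by
    rintro ⟨r, τ, hc, hone⟩
    have hk := descSet_eq_singleton_descentOf hone
    ext
    · simp [wordRank_cycleWord hc hk, orbit]
    · simp [wordPerm_cycleWord hc hk]
  right_inv := by
    rintro ⟨w, hw⟩
    have hw := isPrimitive_iff_injective_rotations.1 hw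
    refine Subtype.ext ?_
    change cycleWord (wordPerm hw) (descentOf _) (wordRank hw 0) = w
    rw [descentOf_eq (descSet_wordPerm hw hn), cycleWord_wordPerm hw hn]

theorem stmt9 (n : ℕ) (hn : 2 ≤ n) :
    (n : ℤ) * Nat.card {τ : Equiv.Perm (Fin n) // IsNCycle τ ∧ (descSet τ).card = 1} =
      ∑ d ∈ n.divisors, (ArithmeticFunction.moebius d) * 2 ^ (n / d) := by
  have : NeZero n := ⟨by omega⟩
  have hcard := Nat.card_congr (primitiveWordEquiv hn)
  rw [Nat.card_prod, Nat.card_eq_fintype_card (α := Fin n), Fintype.card_fin] at hcard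
  rw [← Nat.cast_mul, hcard, card_isPrimitive_eq_sum_moebius (by omega), Fintype.card_bool]
  rfl
end

section
/- For n ≥ 3 with n ≢ 2 (mod 4), the number of n-cycles with exactly one ascent equals the number of n-cycles with exactly one descent. -/
/-!
Let `β x` say whether `x` lies after the unique ascent (or descent) of `τ`, and call
`t ↦ β (τ ^ t x)` the itinerary of `x`. A one-descent cycle increases on both blocks, so its
points are ordered like their itineraries in the lexicographic order; a one-ascent cycle
decreases on both blocks, so its points are ordered like their itineraries with every odd letter
complemented. Itineraries are distinct: if `τ ^ k x` has the itinerary of `x`, then `τ ^ k`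
(or `τ ^ (2 * k)` in the twisted case with `k` odd) maps the points with that itinerary
strictly monotonically onto themselves, hence fixes `x`; for an `n`-cycle this gives `n ∣ k`,
because `n ∣ 2 * k` with `k` odd forces `n ∣ k` unless `n ≡ 2 (mod 4)`. So relabelling the
points of a one-ascent cycle by the plain lexicographic rank of their itineraries gives a
one-descent cycle with the same itineraries, and relabelling by the twisted rank undoes it.
-/

open Equiv Function

theorem Bool.not_lt_not {a b : Bool} : (!a) < !b ↔ b < a := by
  decide +revert

theorem Nat.dvd_of_dvd_two_mul_of_odd {n k : ℕ} (hk : Odd k) (h : n ∣ 2 * k) (h4 : n % 4 ≠ 2) :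
    n ∣ k := by
  rcases Nat.even_or_odd n with ⟨m, rfl⟩ | hn
  · have hm : m ∣ k := by
      rw [← two_mul] at h
      exact Nat.dvd_of_mul_dvd_mul_left two_pos h
    obtain ⟨j, rfl⟩ := Odd.of_dvd_nat hk hm
    omega
  · exact hn.coprime_two_right.dvd_of_dvd_mul_left h

namespace CycleAscents

section LtRev

variable {α : Type*}

def LtRev [LT α] (b : Bool) (x y : α) : Prop := cond b (y < x) (x < y)

variable [LinearOrder α] {b : Bool} {x y z : α}

theorem LtRev.trans (h₁ : LtRev b x y) (h₂ : LtRev b y z) : LtRev b x z := by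
  cases b
  exacts [lt_trans h₁ h₂, lt_trans h₂ h₁]

theorem LtRev.not_ltRev (h : LtRev b x y) : ¬ LtRev b y x := by
  cases b
  exacts [h.not_gt, h.not_gt]

theorem ltRev_of_not_ltRev (hne : x ≠ y) (h : ¬ LtRev b y x) : LtRev b x y := by
  cases b
  exacts [lt_of_le_of_ne (not_lt.1 h) hne, lt_of_le_of_ne (not_lt.1 h) hne.symm]

theorem ltRev_iff_of_strictMono {β : Type*} [LinearOrder β] {f : α → β} (hf : StrictMono f) :
    LtRev b (f x) (f y) ↔ LtRev b x y := by
  cases b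
  exacts [hf.lt_iff_lt, hf.lt_iff_lt]

theorem xor_lt_xor_of_ltRev {β : α → Bool} (hβ : Monotone β) (h : LtRev b x y)
    (hne : β x ≠ β y) : xor b (β x) < xor b (β y) := by
  cases b
  · simpa using lt_of_le_of_ne (hβ h.le) hne
  · simpa [Bool.not_lt_not] using lt_of_le_of_ne (hβ (show y ≤ x from h.le)) hne.symm

end LtRev

section Lex

variable {f g : Lex (ℕ → Bool)}

theorem lex_lt_iff_tail (h : f 0 = g 0) :
    f < g ↔ toLex (fun t => f (t + 1)) < toLex (fun t => g (t + 1)) := by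
  constructor
  · rintro ⟨_ | t, hlt, hft⟩
    · exact absurd h hft.ne
    · exact ⟨t, fun s hs => hlt (s + 1) (by omega), hft⟩
  · rintro ⟨t, hlt, hft⟩
    refine ⟨t + 1, fun s hs => ?_, hft⟩
    cases s
    exacts [h, hlt _ (by omega)]

theorem toLex_xor_lt_toLex_xor_iff (b : Bool) :
    toLex (fun t => xor b (f t)) < toLex (fun t => xor b (g t)) ↔ LtRev b f g := by
  cases b
  · simp only [Bool.false_xor]
    rfl
  · constructor <;> rintro ⟨t, hlt, hft⟩ <;>
      exact ⟨t, fun s hs => by simpa using (hlt s hs).symm, by simpa [Bool.not_lt_not] using hft⟩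

theorem head_le_of_lex_lt (h : f < g) : f 0 ≤ g 0 := by
  obtain ⟨_ | t, hlt, hft⟩ := h
  exacts [hft.le, (hlt 0 (Nat.succ_pos t)).le]

end Lex

section OrbitCode

variable {α : Type*} {b : Bool} {τ : Perm α} {β : α → Bool}

def itinerary (τ : Perm α) (β : α → Bool) (x : α) (t : ℕ) : Bool := β ((τ ^ t) x)

/-- Odd letters are complemented when `b` is set, compensating for `τ` reversing the order
inside blocks: then the code, not the plain itinerary, is ordered like the points. -/
def orbitCode (b : Bool) (τ : Perm α) (β : α → Bool) (x : α) : Lex (ℕ → Bool) :=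
  toLex fun t => xor (b && decide (Odd t)) (itinerary τ β x t)

theorem orbitCode_zero (x : α) : orbitCode b τ β x 0 = β x := by
  simp [orbitCode, itinerary]

theorem orbitCode_succ (x : α) (t : ℕ) :
    orbitCode b τ β x (t + 1) = xor b (orbitCode b τ β (τ x) t) := by
  simp only [orbitCode, itinerary, Pi.toLex_apply, pow_succ, Perm.mul_apply]
  cases b
  · simp
  · simp [Nat.odd_add_one, -Nat.not_odd_iff_even]

theorem injective_orbitCode (h : Injective (itinerary τ β)) : Injective (orbitCode b τ β) := by
  intro x y hxy
  refine h (funext fun t => ?_)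
  simpa [orbitCode] using congrFun (congrArg ofLex hxy) t

theorem orbitCode_conj (s : Perm α) (x : α) :
    orbitCode b (s⁻¹ * τ * s) (β ∘ s) x = orbitCode b τ β (s x) := by
  have hpow (t : ℕ) : (s⁻¹ * τ * s) ^ t = s⁻¹ * τ ^ t * s := by
    simpa using conj_pow (a := s⁻¹) (b := τ) (i := t)
  simp [orbitCode, itinerary, hpow]

variable [LinearOrder α]

def IsBlockMono (b : Bool) (τ : Perm α) (β : α → Bool) : Prop :=
  ∀ ⦃u v⦄, u < v → β u = β v → LtRev b (τ u) (τ v)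

theorem IsBlockMono.ltRev_pow_apply (hτ : IsBlockMono b τ β) {x y : α} (hxy : x < y) {t : ℕ}
    (hbits : ∀ s < t, β ((τ ^ s) x) = β ((τ ^ s) y)) :
    LtRev (b && decide (Odd t)) ((τ ^ t) x) ((τ ^ t) y) := by
  induction t with
  | zero => simpa [LtRev] using hxy
  | succ t ih =>
    have hstep := ih fun s hs => hbits s (by omega)
    have hβ := hbits t (by omega)
    simp only [pow_succ', Perm.mul_apply, Nat.odd_add_one]
    cases b
    · exact hτ hstep hβ
    · by_cases ht : Odd t
      · simp only [ht, decide_true, Bool.and_true] at hstep ⊢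
        exact hτ hstep hβ.symm
      · simp only [ht, decide_false, Bool.and_false, not_false_eq_true, decide_true] at hstep ⊢
        exact hτ hstep hβ

theorem IsBlockMono.pow_apply_eq_self_of_periodic [Finite α] (hτ : IsBlockMono b τ β) {K : ℕ}
    (hK : b = true → Even K) {x : α} (hper : ∀ s, β ((τ ^ (s + K)) x) = β ((τ ^ s) x)) :
    (τ ^ K) x = x := by
  -- `τ ^ K` maps the points sharing the itinerary of `x` strictly monotonically to themselves.
  let S := {y : α // ∀ s, β ((τ ^ s) y) = β ((τ ^ s) x)}
  let g : S → S := fun y => ⟨(τ ^ K) y, fun s => by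
    rw [← Perm.mul_apply, ← pow_add, y.2, hper]⟩
  have hg : StrictMono g := fun y z hyz => by
    show (τ ^ K) y.1 < (τ ^ K) z.1
    have := hτ.ltRev_pow_apply hyz (t := K) fun s _ => (y.2 s).trans (z.2 s).symm
    cases b
    · exact this
    · simpa [LtRev, Nat.not_odd_iff_even.2 (hK rfl)] using this
  exact congrArg Subtype.val (le_antisymm (hg.apply_le (x := ⟨x, fun _ => rfl⟩)) hg.le_apply)

theorem IsBlockMono.injective_itinerary [Fintype α] (hcyc : τ.IsCycleOn Set.univ)
    (hτ : IsBlockMono b τ β) (hb : b = true → Fintype.card α % 4 ≠ 2) :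
    Injective (itinerary τ β) := by
  intro x y hxy
  obtain ⟨k, rfl⟩ := hcyc.exists_pow_eq' Set.finite_univ (Set.mem_univ x) (Set.mem_univ y)
  have hper (m : ℕ) (s : ℕ) : β ((τ ^ (s + m * k)) x) = β ((τ ^ s) x) := by
    induction m generalizing s with
    | zero => simp
    | succ m ih =>
      rw [show s + (m + 1) * k = s + k + m * k by ring, ih, pow_add, Perm.mul_apply]
      exact (congrFun hxy s).symm
  by_cases hk : b = true → Even k
  · exact (hτ.pow_apply_eq_self_of_periodic hk (by simpa using hper 1)).symm
  simp only [Classical.not_imp, Nat.not_even_iff_odd] at hk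
  obtain ⟨rfl, hk⟩ := hk
  have hcyc' : τ.IsCycleOn (Finset.univ : Finset α) := by simpa using hcyc
  have hdvd (m : ℕ) : (τ ^ m) x = x ↔ Fintype.card α ∣ m := by
    simpa using hcyc'.pow_apply_eq (Finset.mem_univ x) (n := m)
  have h2k := hτ.pow_apply_eq_self_of_periodic (K := 2 * k) (fun _ => even_two_mul k) (hper 2)
  exact ((hdvd k).2 (Nat.dvd_of_dvd_two_mul_of_odd hk
    ((hdvd _).1 h2k) (hb rfl))).symm

theorem IsBlockMono.strictMono_orbitCode (hτ : IsBlockMono b τ β) (hβ : Monotone β)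
    (hinj : Injective (itinerary τ β)) : StrictMono (orbitCode b τ β) := by
  intro x y hxy
  have hex : ∃ t, itinerary τ β x t ≠ itinerary τ β y t := by
    by_contra! h
    exact hxy.ne (hinj (funext h))
  classical
  have hagree : ∀ s < Nat.find hex, itinerary τ β x s = itinerary τ β y s :=
    fun s hs => not_not.1 (Nat.find_min hex hs)
  refine ⟨Nat.find hex, fun s hs => by simp [orbitCode, hagree s hs], ?_⟩
  exact xor_lt_xor_of_ltRev hβ (hτ.ltRev_pow_apply hxy hagree) (Nat.find_spec hex)

theorem isBlockMono_conj_of_strictMono {s : Perm α} (hs : StrictMono (orbitCode b τ β ∘ s)) :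
    IsBlockMono b (s⁻¹ * τ * s) (β ∘ s) := by
  intro u v huv hβ
  have htail := (lex_lt_iff_tail (by simpa [orbitCode_zero] using hβ)).1 (hs huv)
  simp only [comp_apply, orbitCode_succ, toLex_xor_lt_toLex_xor_iff] at htail
  rw [← ltRev_iff_of_strictMono hs]
  simp only [comp_apply, Perm.mul_apply, Perm.coe_inv, apply_symm_apply]
  exact htail

theorem monotone_comp_of_strictMono {s : Perm α} (hs : StrictMono (orbitCode b τ β ∘ s)) :
    Monotone (β ∘ s) := by
  intro u v huv
  rcases huv.eq_or_lt with rfl | huv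
  · exact le_rfl
  · simpa [orbitCode_zero] using head_le_of_lex_lt (hs huv)

end OrbitCode

section Breaks

variable {n : ℕ} {b : Bool} {τ : Perm (Fin n)}

/-- With `b = true` a permutation is meant to decrease inside its blocks, which are then
separated by ascents. -/
def breakSet (b : Bool) (τ : Perm (Fin n)) : Finset (Fin n) := cond b (ascSet τ) (descSet τ)

theorem mem_breakSet {i : Fin n} :
    i ∈ breakSet b τ ↔ ∃ j : Fin n, (j : ℕ) = i + 1 ∧ LtRev b (τ j) (τ i) := by
  cases b <;> simp [breakSet, ascSet, descSet, LtRev]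

theorem ltRev_of_not_mem_breakSet {i j : Fin n} (hj : (j : ℕ) = i + 1) (hi : i ∉ breakSet b τ) :
    LtRev b (τ i) (τ j) :=
  ltRev_of_not_ltRev (τ.injective.ne (Fin.ne_of_val_ne (by omega)))
    fun h => hi (mem_breakSet.2 ⟨j, hj, h⟩)

theorem ltRev_of_forall_not_mem_breakSet {p q : Fin n} (hpq : p < q)
    (h : ∀ i ∈ breakSet b τ, i < p ∨ q ≤ i) : LtRev b (τ p) (τ q) := by
  obtain ⟨m, hm⟩ : ∃ m, (q : ℕ) = p + m + 1 := ⟨q - p - 1, by omega⟩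
  induction m generalizing q with
  | zero => exact ltRev_of_not_mem_breakSet (by omega) fun hp => by have := h p hp; omega
  | succ m ih =>
    let w : Fin n := ⟨p + m + 1, by omega⟩
    have hwv : (w : ℕ) = p + m + 1 := rfl
    have hw : w ∉ breakSet b τ := fun hw => by
      have := h w hw
      rw [Fin.lt_def, Fin.le_def] at this
      omega
    refine (ih (q := w) (Fin.lt_def.2 (by omega)) (fun i hi => ?_) rfl).trans
      (ltRev_of_not_mem_breakSet (by omega) hw)
    have := h i hi
    rw [Fin.lt_def, Fin.le_def] at this ⊢
    omega

def afterBreak (b : Bool) (τ : Perm (Fin n)) (x : Fin n) : Bool :=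
  decide (∃ i ∈ breakSet b τ, i < x)

theorem monotone_afterBreak : Monotone (afterBreak b τ) := by
  intro x y hxy
  simp only [afterBreak, Bool.le_iff_imp, decide_eq_true_eq]
  exact fun ⟨i, hi, hix⟩ => ⟨i, hi, hix.trans_le hxy⟩

theorem isBlockMono_afterBreak (hc : (breakSet b τ).card = 1) :
    IsBlockMono b τ (afterBreak b τ) := by
  obtain ⟨a, ha⟩ := Finset.card_eq_one.1 hc
  intro u v huv hβ
  refine ltRev_of_forall_not_mem_breakSet huv fun i hi => ?_
  obtain rfl := Finset.mem_singleton.1 (ha ▸ hi)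
  by_contra! hui
  have : afterBreak b τ u = true := hβ ▸ decide_eq_true ⟨i, hi, hui.2⟩
  obtain ⟨j, hj, hju⟩ := of_decide_eq_true this
  obtain rfl := Finset.mem_singleton.1 (ha ▸ hj)
  exact hju.not_ge hui.1

theorem sq_ne_one_of_isNCycle (hn : 3 ≤ n) (hτ : IsNCycle τ) : τ ^ 2 ≠ 1 := by
  intro h
  have hcyc : τ.IsCycleOn (Finset.univ : Finset (Fin n)) := by simpa [IsNCycle] using hτ
  have := (hcyc.pow_apply_eq (Finset.mem_univ ⟨0, by omega⟩) (n := 2)).1 (by rw [h]; rfl)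
  have := Nat.le_of_dvd two_pos (by simpa using this)
  omega

theorem breakSet_nonempty (hn : 3 ≤ n) (hτ : IsNCycle τ) : (breakSet b τ).Nonempty := by
  by_contra! h
  have hall (p q : Fin n) (hpq : p < q) : LtRev b (τ p) (τ q) :=
    ltRev_of_forall_not_mem_breakSet hpq (by simp [h])
  have hsq : StrictMono ⇑(τ ^ 2) := by
    rw [sq, Perm.coe_mul]
    cases b
    exacts [StrictMono.comp hall hall, StrictAnti.comp hall hall]
  exact sq_ne_one_of_isNCycle hn hτ ((Perm.monotone_iff _).1 hsq.monotone)

theorem IsBlockMono.eq_decide_lt_of_mem_breakSet {β : Fin n → Bool} (hτ : IsBlockMono b τ β)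
    (hβ : Monotone β) {i : Fin n} (hi : i ∈ breakSet b τ) : β = fun x => decide (i < x) := by
  obtain ⟨j, hj, hji⟩ := mem_breakSet.1 hi
  have hij : i < j := Fin.lt_def.2 (by omega)
  obtain ⟨hβi, hβj⟩ := Bool.lt_iff.1 <|
    lt_of_le_of_ne (hβ hij.le) fun hβ => (hτ hij hβ).not_ltRev hji
  funext x
  rcases lt_or_ge i x with hix | hxi
  · have hjx : j ≤ x := Fin.le_def.2 (by rw [Fin.lt_def] at hix; omega)
    simpa [hix, hβj] using Bool.le_iff_imp.1 (hβ hjx)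
  · simpa [hxi.not_gt, hβi] using Bool.le_iff_imp.1 (hβ hxi)

theorem IsBlockMono.card_breakSet_eq_one {β : Fin n → Bool} (hn : 3 ≤ n) (hτ : IsNCycle τ)
    (hblock : IsBlockMono b τ β) (hβ : Monotone β) :
    (breakSet b τ).card = 1 ∧ afterBreak b τ = β := by
  obtain ⟨i, hi⟩ := breakSet_nonempty (b := b) hn hτ
  have hβi := hblock.eq_decide_lt_of_mem_breakSet hβ hi
  have huniq : ∀ i' ∈ breakSet b τ, i' = i := fun i' hi' => by
    have h := hβi.symm.trans (hblock.eq_decide_lt_of_mem_breakSet hβ hi')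
    have h₁ := congrFun h i
    have h₂ := congrFun h i'
    simp only [lt_self_iff_false, decide_false, decide_eq_false_iff_not, not_lt,
      Bool.false_eq, decide_eq_false_iff_not] at h₁ h₂
    exact le_antisymm h₂ h₁
  refine ⟨Finset.card_eq_one.2 ⟨i, Finset.eq_singleton_iff_unique_mem.2 ⟨hi, huniq⟩⟩, ?_⟩
  rw [hβi]
  funext x
  exact decide_eq_decide.2 ⟨fun ⟨i', hi', h⟩ => huniq i' hi' ▸ h, fun h => ⟨i, hi, h⟩⟩

end Breaks

section Sorting

variable {n : ℕ} {γ : Type*} [LinearOrder γ] {c : Fin n → γ}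

theorem strictMono_comp_sort (hc : Injective c) : StrictMono (c ∘ Tuple.sort c) :=
  (Tuple.monotone_sort c).strictMono_of_injective (hc.comp (Tuple.sort c).injective)

theorem sort_eq_of_strictMono_comp {σ : Perm (Fin n)} (h : StrictMono (c ∘ σ)) :
    Tuple.sort c = σ :=
  (Tuple.eq_sort_iff.2 ⟨h.monotone, fun _ _ hij hc => absurd hc (h hij).ne⟩).symm

end Sorting

section Transform

variable {n : ℕ}

theorem isNCycle_conj {τ : Perm (Fin n)} (hτ : IsNCycle τ) (s : Perm (Fin n)) :
    IsNCycle (s⁻¹ * τ * s) := by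
  simpa [IsNCycle] using Perm.IsCycleOn.conj (g := s⁻¹) hτ

/-- `Tuple.sort` lists the points in increasing order of their codes, so its inverse relabels
each point by the rank of its code. -/
noncomputable def transform (b : Bool) (τ : Perm (Fin n)) : Perm (Fin n) :=
  (Tuple.sort (orbitCode (!b) τ (afterBreak b τ)))⁻¹ * τ *
    Tuple.sort (orbitCode (!b) τ (afterBreak b τ))

theorem transform_spec (b : Bool) (h4 : n % 4 ≠ 2) {τ : Perm (Fin n)} (hτ : IsNCycle τ)
    (hc : (breakSet b τ).card = 1) :
    IsNCycle (transform b τ) ∧ (breakSet (!b) (transform b τ)).card = 1 ∧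
      transform (!b) (transform b τ) = τ := by
  have hn : 3 ≤ n := by
    obtain ⟨i, hi⟩ := Finset.card_pos.1 (hc ▸ one_pos)
    obtain ⟨j, hj, -⟩ := mem_breakSet.1 hi
    omega
  set β := afterBreak b τ
  have hblock : IsBlockMono b τ β := isBlockMono_afterBreak hc
  have hbits := hblock.injective_itinerary hτ fun _ => by simpa using h4
  set s := Tuple.sort (orbitCode (!b) τ β)
  have hs : StrictMono (orbitCode (!b) τ β ∘ s) :=
    strictMono_comp_sort (injective_orbitCode hbits)
  have hσ : IsNCycle (s⁻¹ * τ * s) := isNCycle_conj hτ s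
  obtain ⟨hcard, hafter⟩ := (isBlockMono_conj_of_strictMono hs).card_breakSet_eq_one hn hσ
    (monotone_comp_of_strictMono hs)
  have hsort : Tuple.sort (orbitCode b (s⁻¹ * τ * s) (β ∘ s)) = s⁻¹ := by
    apply sort_eq_of_strictMono_comp
    have : orbitCode b (s⁻¹ * τ * s) (β ∘ s) ∘ ⇑s⁻¹ = orbitCode b τ β :=
      funext fun x => by simp [orbitCode_conj]
    rw [this]
    exact hblock.strictMono_orbitCode monotone_afterBreak hbits
  refine ⟨hσ, hcard, ?_⟩
  change transform (!b) (s⁻¹ * τ * s) = τ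
  simp only [transform, Bool.not_not, hafter, hsort]
  group

noncomputable def transformEquiv (h4 : n % 4 ≠ 2) :
    {τ : Perm (Fin n) // IsNCycle τ ∧ (breakSet true τ).card = 1} ≃
      {τ : Perm (Fin n) // IsNCycle τ ∧ (breakSet false τ).card = 1} where
  toFun τ := ⟨transform true τ, (transform_spec true h4 τ.2.1 τ.2.2).1,
    (transform_spec true h4 τ.2.1 τ.2.2).2.1⟩
  invFun τ := ⟨transform false τ, (transform_spec false h4 τ.2.1 τ.2.2).1,
    (transform_spec false h4 τ.2.1 τ.2.2).2.1⟩
  left_inv τ := Subtype.ext (transform_spec true h4 τ.2.1 τ.2.2).2.2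
  right_inv τ := Subtype.ext (transform_spec false h4 τ.2.1 τ.2.2).2.2

end Transform

end CycleAscents

theorem stmt10_general (n : ℕ) (h4 : n % 4 ≠ 2) :
    Nat.card {τ : Equiv.Perm (Fin n) // IsNCycle τ ∧ (ascSet τ).card = 1} =
      Nat.card {τ : Equiv.Perm (Fin n) // IsNCycle τ ∧ (descSet τ).card = 1} :=
  Nat.card_congr (CycleAscents.transformEquiv h4)

theorem stmt10 (n : ℕ) (hn : 3 ≤ n) (h4 : n % 4 ≠ 2) :
    Nat.card {τ : Equiv.Perm (Fin n) // IsNCycle τ ∧ (ascSet τ).card = 1} =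
      Nat.card {τ : Equiv.Perm (Fin n) // IsNCycle τ ∧ (descSet τ).card = 1} :=
  stmt10_general n h4
end

section
/- Let σ ∈ {+,−}^k and define ψ_σ on infinite words over {0,…,k−1} by: the i-th letter of ψ_σ(s) is s_i if the number of j < i with σ_{s_j} = − is even, and k−1−s_i otherwise. Then ψ_σ is an order-preserving bijection from words with the order ≺_σ to words with the lexicographic order, and it intertwines the shift map Σ_σ (deleting the first letter, with order ≺_σ) with the signed shift Σ'_σ (deleting the first letter and complementing the remaining word when the deleted letter t has σ_t = −). -/
/-- Number of positions `i < j` whose letter has negative sign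
(`σ (s i) = true` means the sign of the letter `s i` is `−`). -/
def minusCount {k : ℕ} (σ : Fin k → Bool) (s : ℕ → Fin k) (j : ℕ) : ℕ :=
  ((Finset.range j).filter (fun i => σ (s i) = true)).card

/-- The order `≺_σ` on infinite words. -/
def SignedLt {k : ℕ} (σ : Fin k → Bool) (s t : ℕ → Fin k) : Prop :=
  ∃ j : ℕ, (∀ i, i < j → s i = t i) ∧ s j ≠ t j ∧
    ((Even (minusCount σ s j) ∧ s j < t j) ∨ (¬ Even (minusCount σ s j) ∧ t j < s j))

/-- The lexicographic order on infinite words. -/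
def LexLt {k : ℕ} (s t : ℕ → Fin k) : Prop :=
  ∃ j : ℕ, (∀ i, i < j → s i = t i) ∧ s j < t j

/-- Complementation: `x ↦ k - 1 - x`. -/
def signCompl {k : ℕ} (x : Fin k) : Fin k :=
  ⟨k - 1 - (x : ℕ), by have := x.isLt; omega⟩

/-- The map `ψ_σ`. -/
def psiMap {k : ℕ} (σ : Fin k → Bool) (s : ℕ → Fin k) : ℕ → Fin k :=
  fun i => if Even (minusCount σ s i) then s i else signCompl (s i)

/-- The shift `Σ_σ`: delete the first letter. -/
def shiftWord {k : ℕ} (s : ℕ → Fin k) : ℕ → Fin k := fun i => s (i + 1)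

/-- The signed shift `Σ'_σ`: delete the first letter, and complement the
remaining word when the deleted letter has negative sign. -/
def signedShift' {k : ℕ} (σ : Fin k → Bool) (s : ℕ → Fin k) : ℕ → Fin k :=
  if σ (s 0) = true then fun i => signCompl (s (i + 1)) else fun i => s (i + 1)

section Aux
variable {k : ℕ} (σ : Fin k → Bool)

lemma signCompl_invol (hk : 1 ≤ k) (x : Fin k) : signCompl (signCompl x) = x := by
  have := x.isLt
  simp only [signCompl]
  ext; simp; omega

lemma signCompl_lt_iff {x y : Fin k} : signCompl x < signCompl y ↔ y < x := by
  have hx := x.isLt; have hy := y.isLt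
  simp only [signCompl, Fin.lt_def]
  omega

lemma minusCount_succ (s : ℕ → Fin k) (j : ℕ) :
    minusCount σ s (j + 1) = minusCount σ s j + (if σ (s j) = true then 1 else 0) := by
  unfold minusCount
  rw [Finset.range_add_one, Finset.filter_insert]
  split_ifs with h
  · rw [Finset.card_insert_of_notMem (by simp)]
  · simp

lemma minusCount_congr {s t : ℕ → Fin k} {j : ℕ} (h : ∀ i, i < j → s i = t i) :
    minusCount σ s j = minusCount σ t j := by
  unfold minusCount
  congr 1
  apply Finset.filter_congr
  intro i hi
  rw [h i (Finset.mem_range.mp hi)]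

lemma psi_agree_below {s t : ℕ → Fin k} {j : ℕ} (h : ∀ i, i < j → s i = t i) :
    ∀ i, i < j → psiMap σ s i = psiMap σ t i := by
  intro i hi
  have hc : minusCount σ s i = minusCount σ t i :=
    minusCount_congr σ (fun m hm => h m (hm.trans hi))
  simp only [psiMap, hc, h i hi]

lemma agree_of_psi_agree (hk : 1 ≤ k) {s t : ℕ → Fin k} {j : ℕ}
    (h : ∀ i, i < j → psiMap σ s i = psiMap σ t i) :
    ∀ i, i < j → s i = t i := by
  intro i hi
  induction i using Nat.strong_induction_on with
  | _ i ih =>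
    have hagree : ∀ m, m < i → s m = t m := fun m hm => ih m hm (hm.trans hi)
    have hc : minusCount σ s i = minusCount σ t i := minusCount_congr σ hagree
    have hp := h i hi
    simp only [psiMap, hc] at hp
    split_ifs at hp
    · exact hp
    · have := congrArg signCompl hp
      rwa [signCompl_invol hk, signCompl_invol hk] at this

/-- parity tracker for the inverse map -/
def invAux (t : ℕ → Fin k) : ℕ → Bool
  | 0 => false
  | n + 1 => xor (invAux t n) (σ (if invAux t n then signCompl (t n) else t n))

/-- inverse of psiMap -/
def invPsi (t : ℕ → Fin k) : ℕ → Fin k :=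
  fun i => if invAux σ t i then signCompl (t i) else t i

lemma invPsi_parity (t : ℕ → Fin k) (i : ℕ) :
    Even (minusCount σ (invPsi σ t) i) ↔ invAux σ t i = false := by
  induction i with
  | zero => simp [minusCount, invAux]
  | succ n ih =>
    rw [minusCount_succ]
    have hstep : invAux σ t (n + 1) = xor (invAux σ t n) (σ (invPsi σ t n)) := rfl
    cases ha : invAux σ t n <;> cases hσ : σ (invPsi σ t n) <;>
      simp_all [hstep, Nat.even_add_one]

lemma psi_invPsi (hk : 1 ≤ k) (t : ℕ → Fin k) : psiMap σ (invPsi σ t) = t := by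
  funext i
  simp only [psiMap]
  rcases h : invAux σ t i with _ | _
  · rw [if_pos ((invPsi_parity σ t i).mpr h)]
    simp [invPsi, h]
  · rw [if_neg (by rw [invPsi_parity σ t i, h]; simp)]
    simp [invPsi, h, signCompl_invol hk]

end Aux

theorem stmt14 (k : ℕ) (hk : 2 ≤ k) (σ : Fin k → Bool) :
    Function.Bijective (psiMap σ) ∧
    (∀ s t : ℕ → Fin k, SignedLt σ s t ↔ LexLt (psiMap σ s) (psiMap σ t)) ∧
    (∀ s : ℕ → Fin k, psiMap σ (shiftWord s) = signedShift' σ (psiMap σ s)) := by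
  have hk1 : 1 ≤ k := by omega
  refine ⟨⟨?_, ?_⟩, ?_, ?_⟩
  · -- injective
    intro s t h
    funext i
    exact agree_of_psi_agree σ hk1 (fun m _ => congrFun h m) i (Nat.lt_succ_self i)
  · -- surjective
    intro t
    exact ⟨invPsi σ t, psi_invPsi σ hk1 t⟩
  · -- order
    intro s t
    constructor
    · rintro ⟨j, hagree, hne, hcase⟩
      refine ⟨j, psi_agree_below σ hagree, ?_⟩
      have hc : minusCount σ s j = minusCount σ t j := minusCount_congr σ hagree
      rcases hcase with ⟨he, hlt⟩ | ⟨he, hlt⟩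
      · simp only [psiMap, if_pos he, hc ▸ he, if_pos]
        exact hlt
      · simp only [psiMap, if_neg he, if_neg (hc ▸ he)]
        exact signCompl_lt_iff.mpr hlt
    · rintro ⟨j, hagree, hlt⟩
      have hag : ∀ i, i < j → s i = t i := agree_of_psi_agree σ hk1 hagree
      have hc : minusCount σ s j = minusCount σ t j := minusCount_congr σ hag
      refine ⟨j, hag, ?_, ?_⟩
      · intro h
        simp only [psiMap, hc, h, lt_self_iff_false] at hlt
      · by_cases he : Even (minusCount σ s j)
        · left
          refine ⟨he, ?_⟩
          simpa only [psiMap, if_pos he, if_pos (hc ▸ he)] using hlt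
        · right
          refine ⟨he, ?_⟩
          have := hlt
          simp only [psiMap, if_neg he, if_neg (hc ▸ he)] at this
          exact signCompl_lt_iff.mp this
  · -- shift
    intro s
    funext i
    have h0 : psiMap σ s 0 = s 0 := by simp [psiMap, minusCount]
    have hcnt : ∀ n, minusCount σ (shiftWord s) n + (if σ (s 0) = true then 1 else 0)
        = minusCount σ s (n + 1) := by
      intro n
      induction n with
      | zero =>
        rw [minusCount_succ]
        simp [minusCount]
      | succ m ih =>
        rw [minusCount_succ, minusCount_succ]
        show minusCount σ (shiftWord s) m + _ + _ = _
        rw [Nat.add_right_comm, ih]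
        rfl
    simp only [signedShift', h0]
    split_ifs with hσ
    · -- σ (s 0) = true : parities flip
      have hpar : Even (minusCount σ (shiftWord s) i) ↔ ¬ Even (minusCount σ s (i + 1)) := by
        rw [← hcnt i, if_pos hσ, Nat.even_add_one, not_not]
      simp only [psiMap, shiftWord]
      by_cases he : Even (minusCount σ (shiftWord s) i)
      · rw [if_pos he, if_neg (hpar.mp he), signCompl_invol hk1]
      · rw [if_neg he, if_pos (not_not.mp (fun h => he (hpar.mpr h)))]
    · have hpar : minusCount σ (shiftWord s) i = minusCount σ s (i + 1) := by
        rw [← hcnt i, if_neg hσ, Nat.add_zero]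
      simp only [psiMap, shiftWord, hpar]
end

section
/- Let n ≥ 3 be odd, let ρ ∈ S_n, and define π ∈ S_{2n} by π_i = 2ρ_i − 1 if i is odd and π_i = 2ρ_i if i is even, for 1 ≤ i ≤ 2n, where ρ_{i+n} := ρ_i. Then π is a well-defined permutation of [2n], and for all 1 ≤ i ≤ n one has π̂_{2i−1} = 2ρ̂_i and π̂_{2i} = 2ρ̂_i − 1; in particular π̂ has the same number of ascents as ρ̂. -/
/-!
Since `n` is odd, a position `p < 2n` is determined by `p % n` and `p % 2` (Chinese remainder
theorem), and `π` reads off `2 ρ(p % n) + p % 2` from exactly these residues, so it is a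
permutation. Rotating a position by one rotates both residues, and `π̂ = π ∘ rot ∘ π⁻¹`; hence `π̂`
is the inflation of `ρ̂` in which every value `v` is replaced by the block `(2v + 1, 2v)`.
Inside a block there is a descent, and between the blocks of `u` and `u + 1` there is an ascent
exactly when `ρ̂ u < ρ̂ (u + 1)`.
-/

/-- The cyclic permutation `τ̂` associated to the one-line notation of `τ`:
it sends `τ i` to `τ (i+1)` (cyclically). -/
def hatPerm {n : ℕ} (τ : Equiv.Perm (Fin n)) : Equiv.Perm (Fin n) :=
  τ.symm.trans ((finRotate n).trans τ)

open Equiv Finset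

theorem Nat.eq_of_mod_eq_of_mod_two_eq {n p q : ℕ} (hn : Odd n) (hp : p < 2 * n) (hq : q < 2 * n)
    (hmod : p % n = q % n) (hmod2 : p % 2 = q % 2) : p = q := by
  have hpq : p ≡ q [MOD n * 2] :=
    (Nat.modEq_and_modEq_iff_modEq_mul (Nat.coprime_two_right.mpr hn)).mp ⟨hmod, hmod2⟩
  exact hpq.eq_of_lt_of_lt (by omega) (by omega)

theorem val_finRotate {m : ℕ} (i : Fin m) : (finRotate m i : ℕ) = (i + 1) % m := by
  have := i.neZero
  rw [finRotate_apply, Fin.val_add, Fin.val_one', Nat.add_mod_mod]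

@[simp]
theorem hatPerm_apply_apply {m : ℕ} (τ : Perm (Fin m)) (x : Fin m) :
    hatPerm τ (τ x) = τ (finRotate m x) := by
  simp [hatPerm]

theorem mem_ascSet_iff {m : ℕ} {τ : Perm (Fin m)} {i : Fin m} :
    i ∈ ascSet τ ↔ ∃ h : (i : ℕ) + 1 < m, τ i < τ ⟨i + 1, h⟩ := by
  simp only [ascSet, mem_filter, mem_univ, true_and]
  constructor
  · rintro ⟨⟨j, hj⟩, rfl, hlt⟩
    exact ⟨hj, hlt⟩
  · rintro ⟨h, hlt⟩
    exact ⟨_, rfl, hlt⟩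

section Doubling

variable {n : ℕ} {ρ σ : Perm (Fin n)} {π τ : Perm (Fin (2 * n))}

/- 0-based encoding: position `p` stands for the index `p + 1` (odd iff `p % 2 = 0`) and the value
`v` for `v + 1`, so `π_i = 2ρ_i − 1` (`i` odd), `π_i = 2ρ_i` (`i` even) with `ρ_{i+n} = ρ_i` becomes
`π p = 2 ρ (p % n) + p % 2`. -/
def IsDoubling (ρ : Perm (Fin n)) (π : Perm (Fin (2 * n))) : Prop :=
  ∀ p : Fin (2 * n),
    (π p : ℕ) = 2 * (ρ ⟨p % n, Nat.mod_lt _ (by have := p.isLt; omega)⟩ : ℕ) + p % 2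

theorem exists_isDoubling (hn : Odd n) (ρ : Perm (Fin n)) : ∃ π, IsDoubling ρ π := by
  let f (p : Fin (2 * n)) : Fin (2 * n) :=
    ⟨2 * (ρ ⟨p % n, Nat.mod_lt _ (by have := p.isLt; omega)⟩ : ℕ) + p % 2,
      by have := (ρ ⟨p % n, Nat.mod_lt _ (by have := p.isLt; omega)⟩).isLt; omega⟩
  have hf : f.Injective := by
    intro p q hpq
    have hval := Fin.val_eq_of_eq hpq
    simp only [f] at hval
    have hmod : p % n = q % n :=
      Fin.val_eq_of_eq (ρ.injective (Fin.ext (by omega) :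
        ρ ⟨p % n, Nat.mod_lt _ (by omega)⟩ = ρ ⟨q % n, Nat.mod_lt _ (by omega)⟩))
    exact Fin.ext (Nat.eq_of_mod_eq_of_mod_two_eq hn p.isLt q.isLt hmod (by omega))
  exact ⟨Equiv.ofBijective f hf.bijective_of_finite, fun p => rfl⟩

/-- `τ` is the inflation `σ[21, …, 21]`: each entry `v` of `σ` becomes the block `(2v+1, 2v)`. -/
def IsInflation21 (σ : Perm (Fin n)) (τ : Perm (Fin (2 * n))) : Prop :=
  ∀ u : Fin n,
    (τ ⟨2 * u, by omega⟩ : ℕ) = 2 * (σ u : ℕ) + 1 ∧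
      (τ ⟨2 * u + 1, by omega⟩ : ℕ) = 2 * (σ u : ℕ)

theorem IsDoubling.val_hatPerm (hπ : IsDoubling ρ π) {x : Fin (2 * n)} {u : Fin n}
    (hu : (x : ℕ) / 2 = u) :
    (hatPerm π x : ℕ) = 2 * (hatPerm ρ u : ℕ) + (x + 1) % 2 := by
  obtain ⟨p, rfl⟩ := π.surjective x
  have hp := hπ p
  obtain rfl : ρ ⟨p % n, _⟩ = u := Fin.ext (by omega)
  have hrot : (⟨finRotate (2 * n) p % n, Nat.mod_lt _ (by omega)⟩ : Fin n) =
      finRotate n ⟨p % n, Nat.mod_lt _ (by omega)⟩ := by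
    ext
    simp only [val_finRotate]
    rw [Nat.mod_mod_of_dvd _ (Dvd.intro_left 2 rfl), Nat.mod_add_mod]
  rw [hatPerm_apply_apply, hatPerm_apply_apply, hπ, hrot, hp, val_finRotate,
    Nat.mod_mod_of_dvd _ (Dvd.intro n rfl)]
  omega

theorem IsDoubling.isInflation21_hatPerm (hπ : IsDoubling ρ π) :
    IsInflation21 (hatPerm ρ) (hatPerm π) := by
  intro u
  rw [hπ.val_hatPerm (u := u) (by simp), hπ.val_hatPerm (u := u) (by simp; omega)]
  simp only
  omega

theorem IsInflation21.val_apply (h : IsInflation21 σ τ) {x : Fin (2 * n)} {u : Fin n}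
    (hu : (x : ℕ) / 2 = u) :
    (τ x : ℕ) = 2 * (σ u : ℕ) + (x + 1) % 2 := by
  rcases Nat.even_or_odd' x with ⟨k, hk | hk⟩
  · have hx : (⟨2 * u, by omega⟩ : Fin (2 * n)) = x := Fin.ext (show 2 * (u : ℕ) = x by omega)
    have := (h u).1
    rw [hx] at this
    omega
  · have hx : (⟨2 * u + 1, by omega⟩ : Fin (2 * n)) = x :=
      Fin.ext (show 2 * (u : ℕ) + 1 = x by omega)
    have := (h u).2
    rw [hx] at this
    omega

theorem IsInflation21.mod_two_eq_one_of_mem_ascSet (h : IsInflation21 σ τ) {x : Fin (2 * n)}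
    (hx : x ∈ ascSet τ) : (x : ℕ) % 2 = 1 := by
  obtain ⟨hlt, hasc⟩ := mem_ascSet_iff.mp hx
  by_contra heven
  have hτx := h.val_apply (x := x) (u := ⟨x / 2, by omega⟩) rfl
  have hτy := h.val_apply (x := ⟨x + 1, hlt⟩) (u := ⟨x / 2, by omega⟩) (by simp only; omega)
  rw [Fin.lt_def] at hasc
  simp only at hτy
  omega

theorem IsInflation21.two_mul_add_one_mem_ascSet_iff (h : IsInflation21 σ τ) (u : Fin n) :
    (⟨2 * u + 1, by omega⟩ : Fin (2 * n)) ∈ ascSet τ ↔ u ∈ ascSet σ := by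
  have hblocks (hlt : (u : ℕ) + 1 < n) :
      τ ⟨2 * u + 1, by omega⟩ < τ ⟨2 * u + 1 + 1, by omega⟩ ↔ σ u < σ ⟨u + 1, hlt⟩ := by
    have hne : σ u ≠ σ ⟨u + 1, hlt⟩ := σ.injective.ne (Fin.ne_of_val_ne (by simp))
    have := Fin.val_ne_of_ne hne
    rw [Fin.lt_def, Fin.lt_def, h.val_apply (u := u) (by simp only; omega),
      h.val_apply (u := ⟨u + 1, hlt⟩) (by simp only; omega)]
    simp only
    omega
  simp only [mem_ascSet_iff]
  exact ⟨fun ⟨_, hasc⟩ => ⟨by omega, (hblocks _).mp hasc⟩,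
    fun ⟨hlt, hasc⟩ => ⟨by omega, (hblocks hlt).mpr hasc⟩⟩

theorem IsInflation21.card_ascSet (h : IsInflation21 σ τ) : #(ascSet τ) = #(ascSet σ) := by
  refine (card_bij (fun u _ => ⟨2 * u + 1, by omega⟩)
    (fun u hu => (h.two_mul_add_one_mem_ascSet_iff u).mpr hu) ?_ ?_).symm
  · intro a _ b _ hab
    exact Fin.ext (by simpa using hab)
  · intro x hx
    have hodd := h.mod_two_eq_one_of_mem_ascSet hx
    have hx' : x = ⟨2 * (x / 2 : ℕ) + 1, by omega⟩ :=
      Fin.ext (show (x : ℕ) = 2 * (x / 2 : ℕ) + 1 by omega)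
    rw [hx'] at hx ⊢
    exact ⟨⟨x / 2, by omega⟩, (h.two_mul_add_one_mem_ascSet_iff _).mp hx, rfl⟩

end Doubling

theorem stmt19 (n : ℕ) (hn : 3 ≤ n) (hodd : Odd n) (ρ : Equiv.Perm (Fin n)) :
    (∃ π : Equiv.Perm (Fin (2 * n)), ∀ p : Fin (2 * n),
      ((π p : Fin (2 * n)) : ℕ) =
        2 * ((ρ ⟨(p : ℕ) % n, Nat.mod_lt _ (by omega)⟩ : Fin n) : ℕ) + (p : ℕ) % 2) ∧
    (∀ π : Equiv.Perm (Fin (2 * n)),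
      (∀ p : Fin (2 * n), ((π p : Fin (2 * n)) : ℕ) =
        2 * ((ρ ⟨(p : ℕ) % n, Nat.mod_lt _ (by omega)⟩ : Fin n) : ℕ) + (p : ℕ) % 2) →
      ((∀ u : Fin n,
          ((hatPerm π ⟨2 * (u : ℕ), by have := u.isLt; omega⟩ : Fin (2 * n)) : ℕ) =
            2 * ((hatPerm ρ u : Fin n) : ℕ) + 1 ∧
          ((hatPerm π ⟨2 * (u : ℕ) + 1, by have := u.isLt; omega⟩ : Fin (2 * n)) : ℕ) =
            2 * ((hatPerm ρ u : Fin n) : ℕ)) ∧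
        (ascSet (hatPerm π)).card = (ascSet (hatPerm ρ)).card)) := by
  refine ⟨exists_isDoubling hodd ρ, fun π hπ => ?_⟩
  have hinfl : IsInflation21 (hatPerm ρ) (hatPerm π) := IsDoubling.isInflation21_hatPerm hπ
  exact ⟨hinfl, hinfl.card_ascSet⟩
end
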